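/- arXiv:2304.13782 — 14 statements merged into one kernel-verified Lean document; each statement's English description precedes it below -/
import Mathlib

section
/- Let p_1, p_2, p_3 ∈ ℝ³ be unit vectors and m_1, m_2, m_3 > 0. Set cos σ_ij = ⟪p_i, p_j⟫ (inner product), let I = Σ_k m_k (Id − p_k p_kᵀ) be the 3×3 inertia tensor, and let J be the 3×3 real symmetric matrix with diagonal entries (m_2+m_3, m_3+m_1, m_1+m_2) and off-diagonal entries J_{ij} = J_{ji} = −√(m_i m_j) cos σ_ij for i ≠ j. Then I and J have the same characteristic polynomial, and consequently (both being real symmetric matrices) J is similar to I, i.e., there is an invertible 3×3 matrix M with J = M⁻¹ I M. -/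
/-! With `A` the matrix whose rows are `√m_k p_k`, one has `I = (∑ m_k) • 1 - Aᵀ A` and, since the
`p_k` are unit vectors, `J = (∑ m_k) • 1 - A Aᵀ`. As `Aᵀ A` and `A Aᵀ` have the same characteristic
polynomial, so do `I` and `J`; two symmetric matrices with the same characteristic polynomial are
both orthogonally conjugate to the same diagonal matrix of sorted eigenvalues. -/

open Real Matrix Unitary

namespace Matrix

theorem isHermitian_smul_one_sub_transpose_mul_self {m n : Type*} [Fintype m] [DecidableEq n]
    (c : ℝ) (A : Matrix m n ℝ) : (c • 1 - Aᵀ * A).IsHermitian := by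
  simpa using (isHermitian_one.smul (IsSelfAdjoint.all c)).sub (isHermitian_conjTranspose_mul_self A)

variable {n : Type*} [Fintype n] [DecidableEq n]

theorem charpoly_smul_one_sub_mul_comm {R : Type*} [CommRing R] (c : R) (A B : Matrix n n R) :
    (c • 1 - A * B).charpoly = (c • 1 - B * A).charpoly := by
  have hshift (M N : Matrix n n R) : c • 1 - M * N = -M * N - scalar n (-c) := by
    rw [scalar_apply, ← smul_one_eq_diagonal, neg_smul, neg_mul, sub_neg_eq_add, neg_add_eq_sub]
  rw [hshift, hshift, charpoly_sub_scalar, charpoly_sub_scalar, charpoly_mul_comm, neg_mul, mul_neg]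

theorem IsHermitian.exists_conj_eq_of_charpoly_eq {𝕜 : Type*} [RCLike 𝕜] {A B : Matrix n n 𝕜}
    (hA : A.IsHermitian) (hB : B.IsHermitian) (h : A.charpoly = B.charpoly) :
    ∃ M : Matrix n n 𝕜, IsUnit M.det ∧ B = M⁻¹ * A * M := by
  set u := hB.eigenvectorUnitary * star hA.eigenvectorUnitary
  have hD : (conjStarAlgAut 𝕜 _ hA.eigenvectorUnitary).symm A =
      diagonal (RCLike.ofReal ∘ hB.eigenvalues) := by
    rw [StarAlgEquiv.symm_apply_eq, ← (hA.eigenvalues_eq_eigenvalues_iff hB).mpr h]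
    exact hA.spectral_theorem
  have hBA : B = conjStarAlgAut 𝕜 _ u A := by
    rw [conjStarAlgAut_mul_apply, ← conjStarAlgAut_symm, hD, ← hB.spectral_theorem]
  have hu : (star u : Matrix n n 𝕜) * u = 1 := Unitary.coe_star_mul_self u
  refine ⟨star u, isUnit_det_of_right_inverse hu, ?_⟩
  rw [inv_eq_right_inv hu, hBA, conjStarAlgAut_apply]

end Matrix

section RowScaling

variable {ι n R : Type*} [Fintype ι] [DecidableEq ι] [CommSemiring R] (d : ι → R) (p : ι → n → R)

theorem transpose_mul_self_diagonal_mul_of :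
    (diagonal d * of p)ᵀ * (diagonal d * of p) = ∑ k, (d k * d k) • vecMulVec (p k) (p k) := by
  ext a b
  rw [mul_apply]
  simp only [transpose_apply, diagonal_mul, of_apply, Matrix.sum_apply,
    Matrix.smul_apply, vecMulVec_apply, smul_eq_mul]
  exact Finset.sum_congr rfl fun k _ => by ring

theorem diagonal_mul_of_mul_transpose_self_apply [Fintype n] (i j : ι) :
    (diagonal d * of p * (diagonal d * of p)ᵀ) i j = d i * d j * (p i ⬝ᵥ p j) := by
  rw [mul_apply]
  simp only [transpose_apply, diagonal_mul, of_apply, dotProduct, Finset.mul_sum]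
  exact Finset.sum_congr rfl fun k _ => by ring

end RowScaling

/-- The matrix `J` built from the masses and the mutual cosines
`cos σ_ij = ⟪p_i, p_j⟫` has the same characteristic polynomial as the
inertia tensor `I = Σ_k m_k (Id − p_k p_kᵀ)`, and hence is similar to it. -/
theorem J_similar_to_inertia_tensor
    (m : Fin 3 → ℝ) (hm : ∀ k, 0 < m k)
    (p : Fin 3 → Fin 3 → ℝ) (hp : ∀ k, p k ⬝ᵥ p k = 1)
    (I J : Matrix (Fin 3) (Fin 3) ℝ)
    (hI : I = ∑ k, m k •
      ((1 : Matrix (Fin 3) (Fin 3) ℝ) - Matrix.of fun a b => p k a * p k b))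
    (hJ : J = !![m 1 + m 2, -Real.sqrt (m 0 * m 1) * (p 0 ⬝ᵥ p 1),
                  -Real.sqrt (m 0 * m 2) * (p 0 ⬝ᵥ p 2);
                 -Real.sqrt (m 1 * m 0) * (p 1 ⬝ᵥ p 0), m 2 + m 0,
                  -Real.sqrt (m 1 * m 2) * (p 1 ⬝ᵥ p 2);
                 -Real.sqrt (m 2 * m 0) * (p 2 ⬝ᵥ p 0),
                  -Real.sqrt (m 2 * m 1) * (p 2 ⬝ᵥ p 1), m 0 + m 1]) :
    I.charpoly = J.charpoly ∧
    ∃ M : Matrix (Fin 3) (Fin 3) ℝ, IsUnit M.det ∧ J = M⁻¹ * I * M := by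
  set A := diagonal (fun k => √(m k)) * of p
  have hI' : I = (∑ k, m k) • 1 - Aᵀ * A := by
    simp only [hI, A, transpose_mul_self_diagonal_mul_of, mul_self_sqrt (hm _).le, smul_sub,
      Finset.sum_sub_distrib, Finset.sum_smul, vecMulVec]
  have hJ' : J = (∑ k, m k) • 1 - A * Aᵀ := by
    ext i j
    rw [hJ, Matrix.sub_apply, diagonal_mul_of_mul_transpose_self_apply, ← sqrt_mul (hm i).le]
    fin_cases i <;> fin_cases j <;> simp [Fin.sum_univ_three, hp, sqrt_mul_self (hm _).le] <;> ring
  have hcp : I.charpoly = J.charpoly := by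
    rw [hI', hJ', charpoly_smul_one_sub_mul_comm]
  refine ⟨hcp, IsHermitian.exists_conj_eq_of_charpoly_eq ?_ ?_ hcp⟩
  · exact hI' ▸ isHermitian_smul_one_sub_transpose_mul_self _ A
  · simpa [hJ'] using isHermitian_smul_one_sub_transpose_mul_self _ Aᵀ
end

section
/- Let m_1, m_2, m_3 > 0 and let three bodies on the unit sphere have spherical coordinates (θ_k, φ_k), k = 1,2,3. Define cos σ_ij = cos θ_i cos θ_j + sin θ_i sin θ_j cos(φ_i − φ_j), let J be the 3×3 symmetric matrix with diagonal (m_2+m_3, m_3+m_1, m_1+m_2) and off-diagonal entries −√(m_i m_j) cos σ_ij, let v = (√m_1 cos θ_1, √m_2 cos θ_2, √m_3 cos θ_3)ᵀ, and set I_xz = −Σ_k m_k sin θ_k cos θ_k cos φ_k, I_yz = −Σ_k m_k sin θ_k cos θ_k sin φ_k. Then vᵀ J v = (Σ_ℓ m_ℓ cos²θ_ℓ)(Σ_ℓ m_ℓ sin²θ_ℓ) − (I_xz² + I_yz²). -/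
open Real Matrix

/-- The identity `vᵀ J v = (Σ m_ℓ cos²θ_ℓ)(Σ m_ℓ sin²θ_ℓ) − (I_xz² + I_yz²)`
for `v = (√m_1 cos θ_1, √m_2 cos θ_2, √m_3 cos θ_3)ᵀ`. -/
theorem quadratic_form_identity_for_J
    (m θ φ : Fin 3 → ℝ) (hm : ∀ k, 0 < m k)
    (c : Fin 3 → Fin 3 → ℝ)
    (hc : ∀ i j, c i j = Real.cos (θ i) * Real.cos (θ j)
      + Real.sin (θ i) * Real.sin (θ j) * Real.cos (φ i - φ j))
    (J : Matrix (Fin 3) (Fin 3) ℝ)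
    (hJ : J = !![m 1 + m 2, -Real.sqrt (m 0 * m 1) * c 0 1, -Real.sqrt (m 0 * m 2) * c 0 2;
                 -Real.sqrt (m 1 * m 0) * c 1 0, m 2 + m 0, -Real.sqrt (m 1 * m 2) * c 1 2;
                 -Real.sqrt (m 2 * m 0) * c 2 0, -Real.sqrt (m 2 * m 1) * c 2 1, m 0 + m 1])
    (v : Fin 3 → ℝ) (hv : v = fun k => Real.sqrt (m k) * Real.cos (θ k))
    (Ixz Iyz : ℝ)
    (hIxz : Ixz = -∑ k, m k * Real.sin (θ k) * Real.cos (θ k) * Real.cos (φ k))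
    (hIyz : Iyz = -∑ k, m k * Real.sin (θ k) * Real.cos (θ k) * Real.sin (φ k)) :
    v ⬝ᵥ J.mulVec v =
      (∑ k, m k * Real.cos (θ k) ^ 2) * (∑ k, m k * Real.sin (θ k) ^ 2)
        - (Ixz ^ 2 + Iyz ^ 2) := by
  subst hJ hv hIxz hIyz
  have hs : ∀ i j, Real.sqrt (m i * m j) = Real.sqrt (m i) * Real.sqrt (m j) :=
    fun i j => Real.sqrt_mul (hm i).le _
  have ha : ∀ k, Real.sqrt (m k) ^ 2 = m k := fun k => Real.sq_sqrt (hm k).le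
  simp only [Matrix.mulVec, dotProduct, Fin.sum_univ_three, hc, hs, Real.cos_sub,
    Matrix.cons_val', Matrix.cons_val_zero, Matrix.cons_val_one, Matrix.head_cons,
    Matrix.empty_val', Matrix.cons_val_fin_one, Matrix.head_fin_const,
    Matrix.of_apply, Matrix.cons_val_two, Matrix.tail_cons]
  set a0 := Real.sqrt (m 0) with ha0d
  set a1 := Real.sqrt (m 1) with ha1d
  set a2 := Real.sqrt (m 2) with ha2d
  rw [← ha 0, ← ha 1, ← ha 2]
  linear_combination
    (-(a0^2*a1^2*(Real.cos (θ 1))^2 + a0^2*a2^2*(Real.cos (θ 2))^2)) * Real.sin_sq_add_cos_sq (θ 0)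
    + (-(a1^2*a0^2*(Real.cos (θ 0))^2 + a1^2*a2^2*(Real.cos (θ 2))^2)) * Real.sin_sq_add_cos_sq (θ 1)
    + (-(a2^2*a0^2*(Real.cos (θ 0))^2 + a2^2*a1^2*(Real.cos (θ 1))^2)) * Real.sin_sq_add_cos_sq (θ 2)
    + a0^4*(Real.sin (θ 0))^2*(Real.cos (θ 0))^2 * Real.sin_sq_add_cos_sq (φ 0)
    + a1^4*(Real.sin (θ 1))^2*(Real.cos (θ 1))^2 * Real.sin_sq_add_cos_sq (φ 1)
    + a2^4*(Real.sin (θ 2))^2*(Real.cos (θ 2))^2 * Real.sin_sq_add_cos_sq (φ 2)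
end

section
/- Let m_1, m_2, m_3 > 0 and let three bodies on the unit sphere have spherical coordinates (θ_k, φ_k). Let I = Σ_k m_k (Id − p_k p_kᵀ) be the inertia tensor (p_k the position of body k), define cos σ_ij = cos θ_i cos θ_j + sin θ_i sin θ_j cos(φ_i − φ_j), let J be the 3×3 symmetric matrix with diagonal (m_2+m_3, m_3+m_1, m_1+m_2) and off-diagonal entries −√(m_i m_j) cos σ_ij, let w = (√m_1 cos θ_1, √m_2 cos θ_2, √m_3 cos θ_3)ᵀ, and λ = Σ_ℓ m_ℓ sin²θ_ℓ. Then the following three statements are equivalent: (S1) e_z = (0,0,1) is an eigenvector of I, i.e., I e_z = I_zz e_z with I_zz = Σ_k m_k sin²θ_k; (S2) I_xz = I_yz = 0, where I_xz = −Σ_k m_k sin θ_k cos θ_k cos φ_k and I_yz = −Σ_k m_k sin θ_k cos θ_k sin φ_k; (S3) J w = λ w. -/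
open Real Matrix

/-- Equivalence of: (S1) the z-axis is a principal axis of the inertia tensor `I`;
(S2) `I_xz = I_yz = 0`; (S3) `w = (√m_k cos θ_k)` is an eigenvector of `J`
with eigenvalue `λ = Σ m_ℓ sin²θ_ℓ`. -/
theorem three_equivalent_statements
    (m θ φ : Fin 3 → ℝ) (hm : ∀ k, 0 < m k)
    (p : Fin 3 → Fin 3 → ℝ)
    (hp : ∀ k, p k = ![Real.sin (θ k) * Real.cos (φ k),
                       Real.sin (θ k) * Real.sin (φ k), Real.cos (θ k)])
    (I : Matrix (Fin 3) (Fin 3) ℝ)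
    (hI : I = ∑ k, m k •
      ((1 : Matrix (Fin 3) (Fin 3) ℝ) - Matrix.of fun a b => p k a * p k b))
    (c : Fin 3 → Fin 3 → ℝ)
    (hc : ∀ i j, c i j = Real.cos (θ i) * Real.cos (θ j)
      + Real.sin (θ i) * Real.sin (θ j) * Real.cos (φ i - φ j))
    (J : Matrix (Fin 3) (Fin 3) ℝ)
    (hJ : J = !![m 1 + m 2, -Real.sqrt (m 0 * m 1) * c 0 1, -Real.sqrt (m 0 * m 2) * c 0 2;
                 -Real.sqrt (m 1 * m 0) * c 1 0, m 2 + m 0, -Real.sqrt (m 1 * m 2) * c 1 2;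
                 -Real.sqrt (m 2 * m 0) * c 2 0, -Real.sqrt (m 2 * m 1) * c 2 1, m 0 + m 1])
    (w : Fin 3 → ℝ) (hw : w = fun k => Real.sqrt (m k) * Real.cos (θ k))
    (lam Izz Ixz Iyz : ℝ)
    (hlam : lam = ∑ k, m k * Real.sin (θ k) ^ 2)
    (hIzz : Izz = ∑ k, m k * Real.sin (θ k) ^ 2)
    (hIxz : Ixz = -∑ k, m k * Real.sin (θ k) * Real.cos (θ k) * Real.cos (φ k))
    (hIyz : Iyz = -∑ k, m k * Real.sin (θ k) * Real.cos (θ k) * Real.sin (φ k)) :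
    ((I.mulVec ![0, 0, 1] = Izz • ![0, 0, 1]) ↔ (Ixz = 0 ∧ Iyz = 0)) ∧
    ((Ixz = 0 ∧ Iyz = 0) ↔ J.mulVec w = lam • w) := by
  have hp' : p = fun k => ![Real.sin (θ k) * Real.cos (φ k),
                       Real.sin (θ k) * Real.sin (φ k), Real.cos (θ k)] := funext hp
  have hc' : c = fun i j => Real.cos (θ i) * Real.cos (θ j)
      + Real.sin (θ i) * Real.sin (θ j) * Real.cos (φ i - φ j) :=
    funext fun i => funext (hc i)
  subst hp' hc' hI hJ hw hlam
  -- abbreviations for square roots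
  have hM0 : m 0 = Real.sqrt (m 0) * Real.sqrt (m 0) := (Real.mul_self_sqrt (hm 0).le).symm
  have hM1 : m 1 = Real.sqrt (m 1) * Real.sqrt (m 1) := (Real.mul_self_sqrt (hm 1).le).symm
  have hM2 : m 2 = Real.sqrt (m 2) * Real.sqrt (m 2) := (Real.mul_self_sqrt (hm 2).le).symm
  simp only [Fin.sum_univ_three] at hIxz hIyz hIzz
  set a0 := Real.sqrt (m 0) with ha0
  set a1 := Real.sqrt (m 1) with ha1
  set a2 := Real.sqrt (m 2) with ha2
  have ha0p : 0 < a0 := Real.sqrt_pos.mpr (hm 0)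
  have ha1p : 0 < a1 := Real.sqrt_pos.mpr (hm 1)
  have ha2p : 0 < a2 := Real.sqrt_pos.mpr (hm 2)
  have hq01 : Real.sqrt (m 0 * m 1) = a0 * a1 := Real.sqrt_mul (hm 0).le _
  have hq02 : Real.sqrt (m 0 * m 2) = a0 * a2 := Real.sqrt_mul (hm 0).le _
  have hq10 : Real.sqrt (m 1 * m 0) = a1 * a0 := Real.sqrt_mul (hm 1).le _
  have hq12 : Real.sqrt (m 1 * m 2) = a1 * a2 := Real.sqrt_mul (hm 1).le _
  have hq20 : Real.sqrt (m 2 * m 0) = a2 * a0 := Real.sqrt_mul (hm 2).le _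
  have hq21 : Real.sqrt (m 2 * m 1) = a2 * a1 := Real.sqrt_mul (hm 2).le _
  clear_value a0 a1 a2
  have e0 := Real.sin_sq_add_cos_sq (θ 0)
  have e1 := Real.sin_sq_add_cos_sq (θ 1)
  have e2 := Real.sin_sq_add_cos_sq (θ 2)
  have f0 := Real.sin_sq_add_cos_sq (φ 0)
  have f1 := Real.sin_sq_add_cos_sq (φ 1)
  have f2 := Real.sin_sq_add_cos_sq (φ 2)
  constructor
  · -- Part 1 : S1 ↔ S2
    constructor
    · intro h
      have h0 := congrFun h 0
      have h1 := congrFun h 1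
      simp [Matrix.mulVec, dotProduct, Fin.sum_univ_three, Matrix.sum_apply,
        Matrix.one_apply, Matrix.sub_apply, Matrix.smul_apply] at h0 h1
      refine ⟨?_, ?_⟩
      · rw [hIxz]; linear_combination h0
      · rw [hIyz]; linear_combination h1
    · rintro ⟨hx, hy⟩
      rw [hIxz] at hx
      rw [hIyz] at hy
      funext k
      fin_cases k <;>
        simp [Matrix.mulVec, dotProduct, Fin.sum_univ_three, Matrix.sum_apply,
          Matrix.one_apply, Matrix.sub_apply, Matrix.smul_apply, hIzz] <;>
      [ linear_combination hx ; linear_combination hy ;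
        linear_combination (-(m 0)) * e0 + (-(m 1)) * e1 + (-(m 2)) * e2 ]
    
  · -- Part 2 : S2 ↔ S3
    constructor
    · rintro ⟨hx, hy⟩
      rw [hIxz] at hx
      rw [hIyz] at hy
      rw [hM0, hM1, hM2] at hx hy
      funext k
      fin_cases k <;>
        simp [Matrix.mulVec, dotProduct, Fin.sum_univ_three, Matrix.smul_apply,
          Real.cos_sub, hq01, hq02, hq10, hq12, hq20, hq21] <;>
        simp only [← ha0, ← ha1, ← ha2] <;>
        rw [hM0, hM1, hM2]
      · linear_combination (a0 * Real.sin (θ 0) * Real.cos (φ 0)) * hx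
          + (a0 * Real.sin (θ 0) * Real.sin (φ 0)) * hy
          - (a0 * a1 * a1 * Real.cos (θ 0)) * e1
          - (a0 * a2 * a2 * Real.cos (θ 0)) * e2
          + (a0 * a0 * a0 * Real.sin (θ 0) ^ 2 * Real.cos (θ 0)) * f0
      · linear_combination (a1 * Real.sin (θ 1) * Real.cos (φ 1)) * hx
          + (a1 * Real.sin (θ 1) * Real.sin (φ 1)) * hy
          - (a1 * a0 * a0 * Real.cos (θ 1)) * e0
          - (a1 * a2 * a2 * Real.cos (θ 1)) * e2
          + (a1 * a1 * a1 * Real.sin (θ 1) ^ 2 * Real.cos (θ 1)) * f1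
      · linear_combination (a2 * Real.sin (θ 2) * Real.cos (φ 2)) * hx
          + (a2 * Real.sin (θ 2) * Real.sin (φ 2)) * hy
          - (a2 * a0 * a0 * Real.cos (θ 2)) * e0
          - (a2 * a1 * a1 * Real.cos (θ 2)) * e1
          + (a2 * a2 * a2 * Real.sin (θ 2) ^ 2 * Real.cos (θ 2)) * f2
    · intro h
      have h0 := congrFun h 0
      have h1 := congrFun h 1
      have h2 := congrFun h 2
      simp [Matrix.mulVec, dotProduct, Fin.sum_univ_three, Matrix.smul_apply,
        Real.cos_sub, hq01, hq02, hq10, hq12, hq20, hq21] at h0 h1 h2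
      simp only [← ha0, ← ha1, ← ha2] at h0 h1 h2
      rw [hM0, hM1, hM2] at h0 h1 h2
      clear h
      -- key identities : a_i * (sin θ_i * (cos φ_i * Ixz + sin φ_i * Iyz)) = 0
      have k0 : a0 * (Real.sin (θ 0) * (Real.cos (φ 0) * Ixz + Real.sin (φ 0) * Iyz)) = 0 := by
        rw [hIxz, hIyz, hM0, hM1, hM2]
        linear_combination h0
          + (a0 * a1 * a1 * Real.cos (θ 0)) * e1
          + (a0 * a2 * a2 * Real.cos (θ 0)) * e2
          - (a0 * a0 * a0 * Real.sin (θ 0) ^ 2 * Real.cos (θ 0)) * f0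
      have k1 : a1 * (Real.sin (θ 1) * (Real.cos (φ 1) * Ixz + Real.sin (φ 1) * Iyz)) = 0 := by
        rw [hIxz, hIyz, hM0, hM1, hM2]
        linear_combination h1
          + (a1 * a0 * a0 * Real.cos (θ 1)) * e0
          + (a1 * a2 * a2 * Real.cos (θ 1)) * e2
          - (a1 * a1 * a1 * Real.sin (θ 1) ^ 2 * Real.cos (θ 1)) * f1
      have k2 : a2 * (Real.sin (θ 2) * (Real.cos (φ 2) * Ixz + Real.sin (φ 2) * Iyz)) = 0 := by
        rw [hIxz, hIyz, hM0, hM1, hM2]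
        linear_combination h2
          + (a2 * a0 * a0 * Real.cos (θ 2)) * e0
          + (a2 * a1 * a1 * Real.cos (θ 2)) * e1
          - (a2 * a2 * a2 * Real.sin (θ 2) ^ 2 * Real.cos (θ 2)) * f2
      have z0 : Real.sin (θ 0) * (Real.cos (φ 0) * Ixz + Real.sin (φ 0) * Iyz) = 0 :=
        (mul_eq_zero.mp k0).resolve_left ha0p.ne'
      have z1 : Real.sin (θ 1) * (Real.cos (φ 1) * Ixz + Real.sin (φ 1) * Iyz) = 0 :=
        (mul_eq_zero.mp k1).resolve_left ha1p.ne'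
      have z2 : Real.sin (θ 2) * (Real.cos (φ 2) * Ixz + Real.sin (φ 2) * Iyz) = 0 :=
        (mul_eq_zero.mp k2).resolve_left ha2p.ne'
      have hsum : Ixz * Ixz + Iyz * Iyz = 0 := by
        linear_combination (-(m 0) * Real.cos (θ 0)) * z0 + (-(m 1) * Real.cos (θ 1)) * z1
          + (-(m 2) * Real.cos (θ 2)) * z2 + Ixz * hIxz + Iyz * hIyz
      have hx0 : Ixz * Ixz = 0 := by
        have := mul_self_nonneg Ixz; have := mul_self_nonneg Iyz; linarith
      have hy0 : Iyz * Iyz = 0 := by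
        have := mul_self_nonneg Ixz; have := mul_self_nonneg Iyz; linarith
      exact ⟨mul_self_eq_zero.mp hx0, mul_self_eq_zero.mp hy0⟩
end

section
/- Let m_1, m_2, m_3 > 0 and θ_1, θ_2, θ_3 ∈ ℝ, with θ_{ij} = θ_i − θ_j and D = Σ_ℓ m_ℓ² + 2 Σ_{i<j} m_i m_j cos(2θ_{ij}). Then D = 0 if and only if m_1 + m_2 cos(2θ_{12}) + m_3 cos(2θ_{13}) = 0 and m_2 sin(2θ_{12}) + m_3 sin(2θ_{13}) = 0. Moreover, if D = 0 then the masses satisfy the triangle inequalities m_k ≤ m_i + m_j for every cyclic permutation (i,j,k) of (1,2,3). -/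
open Real

private lemma tri_aux (a b c x : ℝ) (ha : 0 < a) (hb : 0 < b) (hc : 0 < c)
    (hx : x ≤ 1) (h : c ^ 2 = a ^ 2 + b ^ 2 + 2 * a * b * x) : c ≤ a + b := by
  nlinarith [mul_pos ha hb, sq_nonneg (c - a - b), sq_nonneg (c + a + b)]

/-- The shapes with vanishing discriminant `D = 0` are characterized by two
equations, and for them the masses satisfy the triangle inequalities. -/
theorem degenerate_discriminant_condition
    (m1 m2 m3 θ1 θ2 θ3 : ℝ)
    (hm1 : 0 < m1) (hm2 : 0 < m2) (hm3 : 0 < m3)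
    (D : ℝ)
    (hD : D = m1 ^ 2 + m2 ^ 2 + m3 ^ 2
      + 2 * (m1 * m2 * Real.cos (2 * (θ1 - θ2))
        + m1 * m3 * Real.cos (2 * (θ1 - θ3))
        + m2 * m3 * Real.cos (2 * (θ2 - θ3)))) :
    (D = 0 ↔
      (m1 + m2 * Real.cos (2 * (θ1 - θ2)) + m3 * Real.cos (2 * (θ1 - θ3)) = 0 ∧
       m2 * Real.sin (2 * (θ1 - θ2)) + m3 * Real.sin (2 * (θ1 - θ3)) = 0)) ∧
    (D = 0 → m3 ≤ m1 + m2 ∧ m1 ≤ m2 + m3 ∧ m2 ≤ m3 + m1) := by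
  set c12 := Real.cos (2 * (θ1 - θ2)) with hc12
  set s12 := Real.sin (2 * (θ1 - θ2)) with hs12
  set c13 := Real.cos (2 * (θ1 - θ3)) with hc13
  set s13 := Real.sin (2 * (θ1 - θ3)) with hs13
  have h23 : Real.cos (2 * (θ2 - θ3)) = c12 * c13 + s12 * s13 := by
    have h : 2 * (θ2 - θ3) = 2 * (θ1 - θ3) - 2 * (θ1 - θ2) := by ring
    rw [h, Real.cos_sub, hc12, hs12, hc13, hs13]; ring
  have p12 : s12 ^ 2 + c12 ^ 2 = 1 := Real.sin_sq_add_cos_sq _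
  have p13 : s13 ^ 2 + c13 ^ 2 = 1 := Real.sin_sq_add_cos_sq _
  have key : D = (m1 + m2 * c12 + m3 * c13) ^ 2 + (m2 * s12 + m3 * s13) ^ 2 := by
    rw [hD, h23]
    linear_combination (-m2 ^ 2) * p12 + (-m3 ^ 2) * p13
  have b12 : c12 ≤ 1 := Real.cos_le_one _
  have b13 : c13 ≤ 1 := Real.cos_le_one _
  have main : D = 0 → (m1 + m2 * c12 + m3 * c13 = 0 ∧ m2 * s12 + m3 * s13 = 0) := by
    intro h
    have hAB : (m1 + m2 * c12 + m3 * c13) ^ 2 + (m2 * s12 + m3 * s13) ^ 2 = 0 := by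
      rw [← key]; exact h
    have hA2 : (m1 + m2 * c12 + m3 * c13) ^ 2 = 0 := by
      nlinarith [sq_nonneg (m1 + m2 * c12 + m3 * c13), sq_nonneg (m2 * s12 + m3 * s13)]
    have hB2 : (m2 * s12 + m3 * s13) ^ 2 = 0 := by
      nlinarith [sq_nonneg (m1 + m2 * c12 + m3 * c13), sq_nonneg (m2 * s12 + m3 * s13)]
    exact ⟨pow_eq_zero_iff two_ne_zero |>.mp hA2, pow_eq_zero_iff two_ne_zero |>.mp hB2⟩
  refine ⟨⟨main, ?_⟩, ?_⟩
  · rintro ⟨hA, hB⟩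
    rw [key, hA, hB]; ring
  · intro h
    obtain ⟨hA, hB⟩ := main h
    have h3 : m3 ^ 2 = m1 ^ 2 + m2 ^ 2 + 2 * m1 * m2 * c12 := by
      linear_combination (-m3 ^ 2) * p13 + m2 ^ 2 * p12
        - (m1 + m2 * c12 - m3 * c13) * hA - (m2 * s12 - m3 * s13) * hB
    have h2 : m2 ^ 2 = m1 ^ 2 + m3 ^ 2 + 2 * m1 * m3 * c13 := by
      linear_combination (-m2 ^ 2) * p12 + m3 ^ 2 * p13
        - (m1 + m3 * c13 - m2 * c12) * hA - (m3 * s13 - m2 * s12) * hB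
    have h1 : m1 ^ 2 = m2 ^ 2 + m3 ^ 2 + 2 * m2 * m3 * (c12 * c13 + s12 * s13) := by
      linear_combination (m1 - m2 * c12 - m3 * c13) * hA - (m2 * s12 + m3 * s13) * hB
        + m2 ^ 2 * p12 + m3 ^ 2 * p13
    have bc : c12 * c13 + s12 * s13 ≤ 1 := by
      rw [← h23]; exact Real.cos_le_one _
    exact ⟨tri_aux m1 m2 m3 c12 hm1 hm2 hm3 b12 h3,
      tri_aux m2 m3 m1 (c12 * c13 + s12 * s13) hm2 hm3 hm1 bc h1,
      by linarith [tri_aux m1 m3 m2 c13 hm1 hm3 hm2 b13 h2]⟩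
end

section
/- Let m_1, m_2, m_3 > 0, θ_1, θ_2, θ_3 ∈ ℝ, ω ∈ ℝ, and let u_{ij} = u_{ji} ∈ ℝ be symmetric values (representing U'(cos(θ_i − θ_j))). Write θ_{ij} = θ_i − θ_j, F_{ij} = m_i m_j sin(θ_{ij}) u_{ij}, G_{ij} = m_i m_j sin(2θ_{ij}), and D = Σ_ℓ m_ℓ² + 2 Σ_{i<j} m_i m_j cos(2θ_{ij}). Assume D ≠ 0, Σ_k m_k sin(2θ_k) = 0, and that s ∈ {+1,−1} satisfies cos(2θ_i) = (s/√D) Σ_j m_j cos(2θ_{ij}) and sin(2θ_i) = (s/√D) Σ_j m_j sin(2θ_{ij}) for all i. Then the equations of motion (ω²/2) m_k sin(2θ_k) = Σ_{j≠k} m_k m_j sin(θ_k − θ_j) u_{kj}, k = 1,2,3, hold if and only if s(ω²/(2√D)) G_{12} − F_{12} = s(ω²/(2√D)) G_{23} − F_{23} = s(ω²/(2√D)) G_{31} − F_{31}. -/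
open Real

/-- Under the translation formulas (valid when `D ≠ 0`), the equations of
motion for an Eulerian relative equilibrium on a rotating meridian are
equivalent to the equality of the three quantities
`s ω²/(2√D) G_{ij} − F_{ij}`. -/
theorem ERE_equations_of_motion_equivalent
    (m1 m2 m3 θ1 θ2 θ3 ω u12 u23 u31 : ℝ)
    (hm1 : 0 < m1) (hm2 : 0 < m2) (hm3 : 0 < m3)
    (F12 F23 F31 G12 G23 G31 D : ℝ)
    (hF12 : F12 = m1 * m2 * Real.sin (θ1 - θ2) * u12)
    (hF23 : F23 = m2 * m3 * Real.sin (θ2 - θ3) * u23)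
    (hF31 : F31 = m3 * m1 * Real.sin (θ3 - θ1) * u31)
    (hG12 : G12 = m1 * m2 * Real.sin (2 * (θ1 - θ2)))
    (hG23 : G23 = m2 * m3 * Real.sin (2 * (θ2 - θ3)))
    (hG31 : G31 = m3 * m1 * Real.sin (2 * (θ3 - θ1)))
    (hD : D = m1 ^ 2 + m2 ^ 2 + m3 ^ 2
      + 2 * (m1 * m2 * Real.cos (2 * (θ1 - θ2))
        + m1 * m3 * Real.cos (2 * (θ1 - θ3))
        + m2 * m3 * Real.cos (2 * (θ2 - θ3))))
    (hDne : D ≠ 0)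
    (hsum : m1 * Real.sin (2 * θ1) + m2 * Real.sin (2 * θ2) + m3 * Real.sin (2 * θ3) = 0)
    (s : ℝ) (hs : s = 1 ∨ s = -1)
    (ht1c : Real.cos (2 * θ1) = s / Real.sqrt D *
      (m1 + m2 * Real.cos (2 * (θ1 - θ2)) + m3 * Real.cos (2 * (θ1 - θ3))))
    (ht1s : Real.sin (2 * θ1) = s / Real.sqrt D *
      (m2 * Real.sin (2 * (θ1 - θ2)) + m3 * Real.sin (2 * (θ1 - θ3))))
    (ht2c : Real.cos (2 * θ2) = s / Real.sqrt D *
      (m1 * Real.cos (2 * (θ2 - θ1)) + m2 + m3 * Real.cos (2 * (θ2 - θ3))))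
    (ht2s : Real.sin (2 * θ2) = s / Real.sqrt D *
      (m1 * Real.sin (2 * (θ2 - θ1)) + m3 * Real.sin (2 * (θ2 - θ3))))
    (ht3c : Real.cos (2 * θ3) = s / Real.sqrt D *
      (m1 * Real.cos (2 * (θ3 - θ1)) + m2 * Real.cos (2 * (θ3 - θ2)) + m3))
    (ht3s : Real.sin (2 * θ3) = s / Real.sqrt D *
      (m1 * Real.sin (2 * (θ3 - θ1)) + m2 * Real.sin (2 * (θ3 - θ2)))) :
    ((ω ^ 2 / 2 * (m1 * Real.sin (2 * θ1))
        = m1 * m2 * Real.sin (θ1 - θ2) * u12 + m1 * m3 * Real.sin (θ1 - θ3) * u31 ∧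
      ω ^ 2 / 2 * (m2 * Real.sin (2 * θ2))
        = m2 * m1 * Real.sin (θ2 - θ1) * u12 + m2 * m3 * Real.sin (θ2 - θ3) * u23 ∧
      ω ^ 2 / 2 * (m3 * Real.sin (2 * θ3))
        = m3 * m1 * Real.sin (θ3 - θ1) * u31 + m3 * m2 * Real.sin (θ3 - θ2) * u23)
    ↔
      (s * (ω ^ 2 / (2 * Real.sqrt D)) * G12 - F12
         = s * (ω ^ 2 / (2 * Real.sqrt D)) * G23 - F23 ∧
       s * (ω ^ 2 / (2 * Real.sqrt D)) * G23 - F23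
         = s * (ω ^ 2 / (2 * Real.sqrt D)) * G31 - F31)) := by

  subst hF12 hF23 hF31 hG12 hG23 hG31
  have s21 : Real.sin (θ2 - θ1) = -Real.sin (θ1 - θ2) := by
    rw [show θ2 - θ1 = -(θ1 - θ2) by ring, Real.sin_neg]
  have s32 : Real.sin (θ3 - θ2) = -Real.sin (θ2 - θ3) := by
    rw [show θ3 - θ2 = -(θ2 - θ3) by ring, Real.sin_neg]
  have s13 : Real.sin (θ1 - θ3) = -Real.sin (θ3 - θ1) := by
    rw [show θ1 - θ3 = -(θ3 - θ1) by ring, Real.sin_neg]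
  have t21 : Real.sin (2 * (θ2 - θ1)) = -Real.sin (2 * (θ1 - θ2)) := by
    rw [show 2 * (θ2 - θ1) = -(2 * (θ1 - θ2)) by ring, Real.sin_neg]
  have t32 : Real.sin (2 * (θ3 - θ2)) = -Real.sin (2 * (θ2 - θ3)) := by
    rw [show 2 * (θ3 - θ2) = -(2 * (θ2 - θ3)) by ring, Real.sin_neg]
  have t13 : Real.sin (2 * (θ1 - θ3)) = -Real.sin (2 * (θ3 - θ1)) := by
    rw [show 2 * (θ1 - θ3) = -(2 * (θ3 - θ1)) by ring, Real.sin_neg]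
  rw [ht1s, ht2s, ht3s]
  simp only [s21, s32, s13, t21, t32, t13]
  constructor
  · rintro ⟨h1, h2, h3⟩
    exact ⟨by linear_combination -h2, by linear_combination -h3⟩
  · rintro ⟨ha, hb⟩
    exact ⟨by linear_combination ha + hb, by linear_combination -ha, by linear_combination -hb⟩
end

section
/- Let m_1, m_2, m_3 > 0 and let u ∈ ℝ be arbitrary (representing the value U'(−1/2) of the derivative of the potential). Then there exist θ_1, θ_2, θ_3 ∈ ℝ with θ_1 − θ_2 = 2π/3 and θ_2 − θ_3 = 2π/3, and ω ∈ ℝ, such that (ω²/2) m_k sin(2θ_k) = Σ_{j≠k} m_k m_j sin(θ_k − θ_j) · u for k = 1,2,3. That is, for any three masses the equilateral triangle shape θ_1 − θ_2 = θ_2 − θ_3 = θ_3 − θ_1 = 2π/3 (mod 2π) generates a relative equilibrium on a rotating meridian (a fixed point with ω = 0 when the masses are equal). -/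
open Real

/-!
Put `θ₂ = ψ / 2`, `θ₁ = θ₂ + 2π/3`, `θ₃ = θ₂ - 2π/3` and `ω² = 2r`. Dividing the `k`-th equation
by `m_k`, the system asks that `r sin(ψ + 4π/3), r sin ψ, r sin(ψ - 4π/3)` equal
`(√3/2) u (m₂ - m₃), (√3/2) u (m₃ - m₁), (√3/2) u (m₁ - m₂)`. The right-hand sides sum to zero, and
every zero-sum triple is such a balanced three-phase sample: choose `(r, ψ)` as polar coordinates
of the point `((c - a)/√3, b)`.
-/

namespace Real

lemma exists_polar (x y : ℝ) : ∃ r, 0 ≤ r ∧ ∃ ψ, r * cos ψ = x ∧ r * sin ψ = y :=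
  ⟨‖(⟨x, y⟩ : ℂ)‖, norm_nonneg _, Complex.arg ⟨x, y⟩,
    Complex.norm_mul_cos_arg _, Complex.norm_mul_sin_arg _⟩

lemma sin_two_pi_div_three : sin (2 * π / 3) = √3 / 2 := by
  rw [show 2 * π / 3 = π - π / 3 by ring, sin_pi_sub, sin_pi_div_three]

lemma sin_four_pi_div_three : sin (4 * π / 3) = -(√3 / 2) := by
  rw [show 4 * π / 3 = π / 3 + π by ring, sin_add_pi, sin_pi_div_three]

lemma cos_four_pi_div_three : cos (4 * π / 3) = -(1 / 2) := by
  rw [show 4 * π / 3 = π / 3 + π by ring, cos_add_pi, cos_pi_div_three]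

lemma exists_sin_add_four_pi_div_three_of_add_add_eq_zero {a b c : ℝ} (h : a + b + c = 0) :
    ∃ r, 0 ≤ r ∧ ∃ ψ, r * sin (ψ + 4 * π / 3) = a ∧ r * sin ψ = b ∧
      r * sin (ψ - 4 * π / 3) = c := by
  obtain ⟨r, hr, ψ, hcos, hsin⟩ := exists_polar ((c - a) / √3) b
  have hcos' : √3 * (r * cos ψ) = c - a := by
    rw [hcos]; field_simp
  refine ⟨r, hr, ψ, ?_, hsin, ?_⟩ <;>
    simp only [sin_add, sin_sub, sin_four_pi_div_three, cos_four_pi_div_three]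
  · linear_combination (-1 / 2) * hsin - (1 / 2) * hcos' - (1 / 2) * h
  · linear_combination (-1 / 2) * hsin + (1 / 2) * hcos' - (1 / 2) * h

end Real

theorem equilateral_ERE_exists_general
    (m1 m2 m3 : ℝ) (u : ℝ) :
    ∃ θ1 θ2 θ3 ω : ℝ, θ1 - θ2 = 2 * Real.pi / 3 ∧ θ2 - θ3 = 2 * Real.pi / 3 ∧
      (ω ^ 2 / 2 * (m1 * Real.sin (2 * θ1))
        = m1 * m2 * Real.sin (θ1 - θ2) * u + m1 * m3 * Real.sin (θ1 - θ3) * u) ∧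
      (ω ^ 2 / 2 * (m2 * Real.sin (2 * θ2))
        = m2 * m1 * Real.sin (θ2 - θ1) * u + m2 * m3 * Real.sin (θ2 - θ3) * u) ∧
      (ω ^ 2 / 2 * (m3 * Real.sin (2 * θ3))
        = m3 * m1 * Real.sin (θ3 - θ1) * u + m3 * m2 * Real.sin (θ3 - θ2) * u) := by
  set k := √3 / 2 * u
  obtain ⟨r, hr, ψ, h1, h2, h3⟩ := exists_sin_add_four_pi_div_three_of_add_add_eq_zero
    (a := k * (m2 - m3)) (b := k * (m3 - m1)) (c := k * (m1 - m2)) (by ring)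
  have hω : √(2 * r) ^ 2 / 2 = r := by rw [sq_sqrt (by positivity)]; ring
  refine ⟨ψ / 2 + 2 * π / 3, ψ / 2, ψ / 2 - 2 * π / 3, √(2 * r), by ring, by ring, ?_, ?_, ?_⟩
  · rw [hω, show 2 * (ψ / 2 + 2 * π / 3) = ψ + 4 * π / 3 by ring, add_sub_cancel_left,
      show ψ / 2 + 2 * π / 3 - (ψ / 2 - 2 * π / 3) = 4 * π / 3 by ring,
      sin_two_pi_div_three, sin_four_pi_div_three]
    linear_combination m1 * h1
  · rw [hω, show 2 * (ψ / 2) = ψ by ring, sub_add_cancel_left, sub_sub_cancel, sin_neg,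
      sin_two_pi_div_three]
    linear_combination m2 * h2
  · rw [hω, show 2 * (ψ / 2 - 2 * π / 3) = ψ - 4 * π / 3 by ring,
      show ψ / 2 - 2 * π / 3 - (ψ / 2 + 2 * π / 3) = -(4 * π / 3) by ring, sub_sub_cancel_left,
      sin_neg, sin_neg, sin_two_pi_div_three, sin_four_pi_div_three]
    linear_combination m3 * h3

/-- For any three positive masses, the equilateral triangle shape
`θ_1 − θ_2 = θ_2 − θ_3 = 2π/3` generates a relative equilibrium on a
rotating meridian. -/
theorem equilateral_ERE_exists
    (m1 m2 m3 : ℝ) (hm1 : 0 < m1) (hm2 : 0 < m2) (hm3 : 0 < m3) (u : ℝ) :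
    ∃ θ1 θ2 θ3 ω : ℝ, θ1 - θ2 = 2 * Real.pi / 3 ∧ θ2 - θ3 = 2 * Real.pi / 3 ∧
      (ω ^ 2 / 2 * (m1 * Real.sin (2 * θ1))
        = m1 * m2 * Real.sin (θ1 - θ2) * u + m1 * m3 * Real.sin (θ1 - θ3) * u) ∧
      (ω ^ 2 / 2 * (m2 * Real.sin (2 * θ2))
        = m2 * m1 * Real.sin (θ2 - θ1) * u + m2 * m3 * Real.sin (θ2 - θ3) * u) ∧
      (ω ^ 2 / 2 * (m3 * Real.sin (2 * θ3))
        = m3 * m1 * Real.sin (θ3 - θ1) * u + m3 * m2 * Real.sin (θ3 - θ2) * u) :=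
  equilateral_ERE_exists_general m1 m2 m3 u
end

section
/- Let f : ℝ → ℝ, let m_1, m_2, m_3 > 0, θ_1, θ_2, θ_3 ∈ ℝ, and ω ∈ ℝ satisfy (ω²/2) m_k sin(2θ_k) = Σ_{j≠k} m_k m_j sin(θ_k − θ_j) f(cos(θ_k − θ_j)) for k = 1,2,3. Then the shifted angles θ'_k = θ_k + π/2 satisfy (ω²/2) m_k sin(2θ'_k) = Σ_{j≠k} m_k m_j sin(θ'_k − θ'_j) (−f)(cos(θ'_k − θ'_j)) for k = 1,2,3. That is, if a shape on a rotating meridian generates a relative equilibrium for the potential with derivative f, the same shape generates one for the potential with derivative −f, the two configurations differing by an overall rotation of 90 degrees. -/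
open Real

/-- If a shape on a rotating meridian generates a relative equilibrium for the
potential with derivative `f`, then the configuration rotated by 90 degrees
generates a relative equilibrium (with the same shape) for the potential with
derivative `−f`. -/
theorem attractive_to_repulsive_shift
    (f : ℝ → ℝ) (m1 m2 m3 θ1 θ2 θ3 ω : ℝ)
    (hm1 : 0 < m1) (hm2 : 0 < m2) (hm3 : 0 < m3)
    (h1 : ω ^ 2 / 2 * (m1 * Real.sin (2 * θ1))
      = m1 * m2 * Real.sin (θ1 - θ2) * f (Real.cos (θ1 - θ2))
        + m1 * m3 * Real.sin (θ1 - θ3) * f (Real.cos (θ1 - θ3)))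
    (h2 : ω ^ 2 / 2 * (m2 * Real.sin (2 * θ2))
      = m2 * m1 * Real.sin (θ2 - θ1) * f (Real.cos (θ2 - θ1))
        + m2 * m3 * Real.sin (θ2 - θ3) * f (Real.cos (θ2 - θ3)))
    (h3 : ω ^ 2 / 2 * (m3 * Real.sin (2 * θ3))
      = m3 * m1 * Real.sin (θ3 - θ1) * f (Real.cos (θ3 - θ1))
        + m3 * m2 * Real.sin (θ3 - θ2) * f (Real.cos (θ3 - θ2))) :
    (ω ^ 2 / 2 * (m1 * Real.sin (2 * (θ1 + Real.pi / 2)))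
      = m1 * m2 * Real.sin ((θ1 + Real.pi / 2) - (θ2 + Real.pi / 2))
          * (-f (Real.cos ((θ1 + Real.pi / 2) - (θ2 + Real.pi / 2))))
        + m1 * m3 * Real.sin ((θ1 + Real.pi / 2) - (θ3 + Real.pi / 2))
          * (-f (Real.cos ((θ1 + Real.pi / 2) - (θ3 + Real.pi / 2))))) ∧
    (ω ^ 2 / 2 * (m2 * Real.sin (2 * (θ2 + Real.pi / 2)))
      = m2 * m1 * Real.sin ((θ2 + Real.pi / 2) - (θ1 + Real.pi / 2))
          * (-f (Real.cos ((θ2 + Real.pi / 2) - (θ1 + Real.pi / 2))))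
        + m2 * m3 * Real.sin ((θ2 + Real.pi / 2) - (θ3 + Real.pi / 2))
          * (-f (Real.cos ((θ2 + Real.pi / 2) - (θ3 + Real.pi / 2))))) ∧
    (ω ^ 2 / 2 * (m3 * Real.sin (2 * (θ3 + Real.pi / 2)))
      = m3 * m1 * Real.sin ((θ3 + Real.pi / 2) - (θ1 + Real.pi / 2))
          * (-f (Real.cos ((θ3 + Real.pi / 2) - (θ1 + Real.pi / 2))))
        + m3 * m2 * Real.sin ((θ3 + Real.pi / 2) - (θ2 + Real.pi / 2))
          * (-f (Real.cos ((θ3 + Real.pi / 2) - (θ2 + Real.pi / 2))))) := by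
  have e12 : (θ1 + Real.pi / 2) - (θ2 + Real.pi / 2) = θ1 - θ2 := by ring
  have e13 : (θ1 + Real.pi / 2) - (θ3 + Real.pi / 2) = θ1 - θ3 := by ring
  have e21 : (θ2 + Real.pi / 2) - (θ1 + Real.pi / 2) = θ2 - θ1 := by ring
  have e23 : (θ2 + Real.pi / 2) - (θ3 + Real.pi / 2) = θ2 - θ3 := by ring
  have e31 : (θ3 + Real.pi / 2) - (θ1 + Real.pi / 2) = θ3 - θ1 := by ring
  have e32 : (θ3 + Real.pi / 2) - (θ2 + Real.pi / 2) = θ3 - θ2 := by ring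
  have s1 : Real.sin (2 * (θ1 + Real.pi / 2)) = -Real.sin (2 * θ1) := by
    rw [show 2 * (θ1 + Real.pi / 2) = 2 * θ1 + Real.pi by ring, Real.sin_add_pi]
  have s2 : Real.sin (2 * (θ2 + Real.pi / 2)) = -Real.sin (2 * θ2) := by
    rw [show 2 * (θ2 + Real.pi / 2) = 2 * θ2 + Real.pi by ring, Real.sin_add_pi]
  have s3 : Real.sin (2 * (θ3 + Real.pi / 2)) = -Real.sin (2 * θ3) := by
    rw [show 2 * (θ3 + Real.pi / 2) = 2 * θ3 + Real.pi by ring, Real.sin_add_pi]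
  rw [e12, e13, e21, e23, e31, e32, s1, s2, s3]
  refine ⟨by linarith, by linarith, by linarith⟩
end

section
/- Let m_1, m_2, m_3 > 0, let three bodies on the unit sphere have spherical coordinates (θ_k, φ_k) with θ_k ∈ [0, π], let ω ∈ ℝ, and let u_12, u_23, u_31 be real numbers all of the same strict sign (all positive or all negative), representing U'(cos σ_ij). Assume: (i) the position vectors p_1, p_2, p_3 are linearly independent (the bodies are not on a common great circle, i.e., non-collinear); (ii) I_xz = I_yz = 0, i.e., Σ_i m_i sin θ_i cos θ_i cos φ_i = 0 and Σ_i m_i sin θ_i cos θ_i sin φ_i = 0; (iii) the equations m_1 m_2 u_12 sin θ_1 sin θ_2 sin(φ_1−φ_2) = m_2 m_3 u_23 sin θ_2 sin θ_3 sin(φ_2−φ_3) = m_3 m_1 u_31 sin θ_3 sin θ_1 sin(φ_3−φ_1) hold; and (iv) ω² m_i sin θ_i cos θ_i = Σ_{j≠i} m_i m_j u_ij (sin θ_i cos θ_j − cos θ_i sin θ_j cos(φ_i−φ_j)) for i = 1,2,3. Then: sin θ_k ≠ 0 for all k; sin(φ_i − φ_j) ≠ 0 for all pairs i ≠ j; u_12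 cos θ_3 = u_23 cos θ_1 = u_31 cos θ_2 ≠ 0; and cos θ_k ≠ 0 for all k. -/
open Real

/-- Necessary conditions for a Lagrangian (non-collinear) relative equilibrium
on the unit sphere: no body at a pole, no two bodies on a common meridian,
`u_12 cos θ_3 = u_23 cos θ_1 = u_31 cos θ_2 ≠ 0`, and no body on the equator. -/
theorem LRE_conditions
    (m θ φ : Fin 3 → ℝ) (hm : ∀ k, 0 < m k)
    (hθrange : ∀ k, 0 ≤ θ k ∧ θ k ≤ Real.pi)
    (ω : ℝ) (u12 u23 u31 : ℝ)
    (husign : (0 < u12 ∧ 0 < u23 ∧ 0 < u31) ∨ (u12 < 0 ∧ u23 < 0 ∧ u31 < 0))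
    (p : Fin 3 → Fin 3 → ℝ)
    (hp : ∀ k, p k = ![Real.sin (θ k) * Real.cos (φ k),
                       Real.sin (θ k) * Real.sin (φ k), Real.cos (θ k)])
    (hindep : LinearIndependent ℝ p)
    (hIxz : ∑ k, m k * Real.sin (θ k) * Real.cos (θ k) * Real.cos (φ k) = 0)
    (hIyz : ∑ k, m k * Real.sin (θ k) * Real.cos (θ k) * Real.sin (φ k) = 0)
    (hφ12 : m 0 * m 1 * u12 * Real.sin (θ 0) * Real.sin (θ 1) * Real.sin (φ 0 - φ 1)
      = m 1 * m 2 * u23 * Real.sin (θ 1) * Real.sin (θ 2) * Real.sin (φ 1 - φ 2))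
    (hφ23 : m 1 * m 2 * u23 * Real.sin (θ 1) * Real.sin (θ 2) * Real.sin (φ 1 - φ 2)
      = m 2 * m 0 * u31 * Real.sin (θ 2) * Real.sin (θ 0) * Real.sin (φ 2 - φ 0))
    (hθ1 : ω ^ 2 * (m 0 * Real.sin (θ 0) * Real.cos (θ 0))
      = m 0 * m 1 * u12 * (Real.sin (θ 0) * Real.cos (θ 1)
          - Real.cos (θ 0) * Real.sin (θ 1) * Real.cos (φ 0 - φ 1))
        + m 0 * m 2 * u31 * (Real.sin (θ 0) * Real.cos (θ 2)
          - Real.cos (θ 0) * Real.sin (θ 2) * Real.cos (φ 0 - φ 2)))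
    (hθ2 : ω ^ 2 * (m 1 * Real.sin (θ 1) * Real.cos (θ 1))
      = m 1 * m 0 * u12 * (Real.sin (θ 1) * Real.cos (θ 0)
          - Real.cos (θ 1) * Real.sin (θ 0) * Real.cos (φ 1 - φ 0))
        + m 1 * m 2 * u23 * (Real.sin (θ 1) * Real.cos (θ 2)
          - Real.cos (θ 1) * Real.sin (θ 2) * Real.cos (φ 1 - φ 2)))
    (hθ3 : ω ^ 2 * (m 2 * Real.sin (θ 2) * Real.cos (θ 2))
      = m 2 * m 0 * u31 * (Real.sin (θ 2) * Real.cos (θ 0)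
          - Real.cos (θ 2) * Real.sin (θ 0) * Real.cos (φ 2 - φ 0))
        + m 2 * m 1 * u23 * (Real.sin (θ 2) * Real.cos (θ 1)
          - Real.cos (θ 2) * Real.sin (θ 1) * Real.cos (φ 2 - φ 1))) :
    (∀ k, Real.sin (θ k) ≠ 0) ∧
    (∀ i j, i ≠ j → Real.sin (φ i - φ j) ≠ 0) ∧
    (u12 * Real.cos (θ 2) = u23 * Real.cos (θ 0) ∧
     u23 * Real.cos (θ 0) = u31 * Real.cos (θ 1) ∧
     u23 * Real.cos (θ 0) ≠ 0) ∧
    (∀ k, Real.cos (θ k) ≠ 0) := by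
  have hu12 : u12 ≠ 0 := by rcases husign with ⟨h,_,_⟩|⟨h,_,_⟩ <;> [exact ne_of_gt h; exact ne_of_lt h]
  have hu23 : u23 ≠ 0 := by rcases husign with ⟨_,h,_⟩|⟨_,h,_⟩ <;> [exact ne_of_gt h; exact ne_of_lt h]
  have hu31 : u31 ≠ 0 := by rcases husign with ⟨_,_,h⟩|⟨_,_,h⟩ <;> [exact ne_of_gt h; exact ne_of_lt h]
  have hm0 : m 0 ≠ 0 := (hm 0).ne'
  have hm1 : m 1 ≠ 0 := (hm 1).ne'
  have hm2 : m 2 ≠ 0 := (hm 2).ne'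
  have hφ13 := hφ12.trans hφ23
  simp only [Fin.sum_univ_three] at hIxz hIyz
  -- the determinant of the position matrix is nonzero
  have hdet : (Matrix.of p).det ≠ 0 := by
    have h1 : IsUnit (Matrix.of p) := Matrix.linearIndependent_rows_iff_isUnit.mp hindep
    exact ((Matrix.isUnit_iff_isUnit_det _).mp h1).ne_zero
  have hD : Real.cos (θ 0) * (Real.sin (θ 1) * Real.sin (θ 2) * Real.sin (φ 1 - φ 2))
      + Real.cos (θ 1) * (Real.sin (θ 2) * Real.sin (θ 0) * Real.sin (φ 2 - φ 0))
      + Real.cos (θ 2) * (Real.sin (θ 0) * Real.sin (θ 1) * Real.sin (φ 0 - φ 1)) ≠ 0 := by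
    intro h
    apply hdet
    rw [Matrix.det_fin_three]
    simp only [Matrix.of_apply, hp, Matrix.cons_val_zero, Matrix.cons_val_one, Matrix.head_cons,
      Matrix.cons_val_two, Matrix.tail_cons]
    linear_combination (-1 : ℝ) * h
      + (Real.cos (θ 0) * Real.sin (θ 1) * Real.sin (θ 2)) * Real.sin_sub (φ 1) (φ 2)
      + (Real.cos (θ 1) * Real.sin (θ 2) * Real.sin (θ 0)) * Real.sin_sub (φ 2) (φ 0)
      + (Real.cos (θ 2) * Real.sin (θ 0) * Real.sin (θ 1)) * Real.sin_sub (φ 0) (φ 1)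
  -- Part 1 : no body at a pole
  have ha0 : Real.sin (θ 0) ≠ 0 := by
    intro h0
    apply hD
    have hR : m 1 * m 2 * u23 * Real.sin (θ 1) * Real.sin (θ 2) * Real.sin (φ 1 - φ 2) = 0 := by
      rw [← hφ12, h0]; ring
    have h' : (m 1 * m 2 * u23) * (Real.sin (θ 1) * (Real.sin (θ 2) * Real.sin (φ 1 - φ 2))) = 0 := by
      linear_combination hR
    have hz := (mul_eq_zero.mp h').resolve_left (mul_ne_zero (mul_ne_zero hm1 hm2) hu23)
    rw [h0]
    linear_combination Real.cos (θ 0) * hz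
  have ha1 : Real.sin (θ 1) ≠ 0 := by
    intro h1
    apply hD
    have hR : m 2 * m 0 * u31 * Real.sin (θ 2) * Real.sin (θ 0) * Real.sin (φ 2 - φ 0) = 0 := by
      rw [← hφ23, h1]; ring
    have h' : (m 2 * m 0 * u31) * (Real.sin (θ 2) * (Real.sin (θ 0) * Real.sin (φ 2 - φ 0))) = 0 := by
      linear_combination hR
    have hz := (mul_eq_zero.mp h').resolve_left (mul_ne_zero (mul_ne_zero hm2 hm0) hu31)
    rw [h1]
    linear_combination Real.cos (θ 1) * hz
  have ha2 : Real.sin (θ 2) ≠ 0 := by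
    intro h2
    apply hD
    have hR : m 0 * m 1 * u12 * Real.sin (θ 0) * Real.sin (θ 1) * Real.sin (φ 0 - φ 1) = 0 := by
      rw [hφ13, h2]; ring
    have h' : (m 0 * m 1 * u12) * (Real.sin (θ 0) * (Real.sin (θ 1) * Real.sin (φ 0 - φ 1))) = 0 := by
      linear_combination hR
    have hz := (mul_eq_zero.mp h').resolve_left (mul_ne_zero (mul_ne_zero hm0 hm1) hu12)
    rw [h2]
    linear_combination Real.cos (θ 2) * hz
  -- Part 2 : no two bodies on a common meridian
  have extract12 : ∀ c : ℝ, m 1 * m 2 * u23 * Real.sin (θ 1) * Real.sin (θ 2) * Real.sin (φ 1 - φ 2) = c * 0 →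
      Real.sin (φ 1 - φ 2) = 0 := by
    intro c hc
    have h' : (m 1 * m 2 * u23 * Real.sin (θ 1) * Real.sin (θ 2)) * Real.sin (φ 1 - φ 2) = 0 := by
      linear_combination hc
    exact (mul_eq_zero.mp h').resolve_left
      (mul_ne_zero (mul_ne_zero (mul_ne_zero (mul_ne_zero hm1 hm2) hu23) ha1) ha2)
  have extract01 : ∀ c : ℝ, m 0 * m 1 * u12 * Real.sin (θ 0) * Real.sin (θ 1) * Real.sin (φ 0 - φ 1) = c * 0 →
      Real.sin (φ 0 - φ 1) = 0 := by
    intro c hc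
    have h' : (m 0 * m 1 * u12 * Real.sin (θ 0) * Real.sin (θ 1)) * Real.sin (φ 0 - φ 1) = 0 := by
      linear_combination hc
    exact (mul_eq_zero.mp h').resolve_left
      (mul_ne_zero (mul_ne_zero (mul_ne_zero (mul_ne_zero hm0 hm1) hu12) ha0) ha1)
  have extract20 : ∀ c : ℝ, m 2 * m 0 * u31 * Real.sin (θ 2) * Real.sin (θ 0) * Real.sin (φ 2 - φ 0) = c * 0 →
      Real.sin (φ 2 - φ 0) = 0 := by
    intro c hc
    have h' : (m 2 * m 0 * u31 * Real.sin (θ 2) * Real.sin (θ 0)) * Real.sin (φ 2 - φ 0) = 0 := by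
      linear_combination hc
    exact (mul_eq_zero.mp h').resolve_left
      (mul_ne_zero (mul_ne_zero (mul_ne_zero (mul_ne_zero hm2 hm0) hu31) ha2) ha0)
  have hs01 : Real.sin (φ 0 - φ 1) ≠ 0 := by
    intro h
    apply hD
    have hz12 : Real.sin (φ 1 - φ 2) = 0 :=
      extract12 (m 0 * m 1 * u12 * Real.sin (θ 0) * Real.sin (θ 1)) (by rw [← hφ12, h])
    have hz20 : Real.sin (φ 2 - φ 0) = 0 :=
      extract20 (m 0 * m 1 * u12 * Real.sin (θ 0) * Real.sin (θ 1)) (by rw [← hφ13, h])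
    rw [h, hz12, hz20]; ring
  have hs12 : Real.sin (φ 1 - φ 2) ≠ 0 := by
    intro h
    apply hD
    have hz01 : Real.sin (φ 0 - φ 1) = 0 :=
      extract01 (m 1 * m 2 * u23 * Real.sin (θ 1) * Real.sin (θ 2)) (by rw [hφ12, h])
    have hz20 : Real.sin (φ 2 - φ 0) = 0 :=
      extract20 (m 1 * m 2 * u23 * Real.sin (θ 1) * Real.sin (θ 2)) (by rw [← hφ23, h])
    rw [h, hz01, hz20]; ring
  have hs20 : Real.sin (φ 2 - φ 0) ≠ 0 := by
    intro h
    apply hD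
    have hz01 : Real.sin (φ 0 - φ 1) = 0 :=
      extract01 (m 2 * m 0 * u31 * Real.sin (θ 2) * Real.sin (θ 0)) (by rw [hφ13, h])
    have hz12 : Real.sin (φ 1 - φ 2) = 0 :=
      extract12 (m 2 * m 0 * u31 * Real.sin (θ 2) * Real.sin (θ 0)) (by rw [hφ23, h])
    rw [h, hz01, hz12]; ring
  have hs10 : Real.sin (φ 1 - φ 0) ≠ 0 := by
    intro h; apply hs01
    rw [show φ 0 - φ 1 = -(φ 1 - φ 0) by ring, Real.sin_neg, h, neg_zero]
  have hs21 : Real.sin (φ 2 - φ 1) ≠ 0 := by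
    intro h; apply hs12
    rw [show φ 1 - φ 2 = -(φ 2 - φ 1) by ring, Real.sin_neg, h, neg_zero]
  have hs02 : Real.sin (φ 0 - φ 2) ≠ 0 := by
    intro h; apply hs20
    rw [show φ 2 - φ 0 = -(φ 0 - φ 2) by ring, Real.sin_neg, h, neg_zero]
  -- moment conditions combined
  have hA : m 1 * (Real.sin (θ 1) * Real.cos (θ 1) * Real.sin (φ 0 - φ 1))
      = m 2 * (Real.sin (θ 2) * Real.cos (θ 2) * Real.sin (φ 2 - φ 0)) := by
    linear_combination Real.sin (φ 0) * hIxz - Real.cos (φ 0) * hIyz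
      + (m 1 * Real.sin (θ 1) * Real.cos (θ 1)) * Real.sin_sub (φ 0) (φ 1)
      - (m 2 * Real.sin (θ 2) * Real.cos (θ 2)) * Real.sin_sub (φ 2) (φ 0)
  have hB : m 0 * (Real.sin (θ 0) * Real.cos (θ 0) * Real.sin (φ 0 - φ 1))
      = m 2 * (Real.sin (θ 2) * Real.cos (θ 2) * Real.sin (φ 1 - φ 2)) := by
    linear_combination - Real.sin (φ 1) * hIxz + Real.cos (φ 1) * hIyz
      + (m 0 * Real.sin (θ 0) * Real.cos (θ 0)) * Real.sin_sub (φ 0) (φ 1)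
      - (m 2 * Real.sin (θ 2) * Real.cos (θ 2)) * Real.sin_sub (φ 1) (φ 2)
  -- Part 3 : the equalities
  have key1 : (u12 * Real.cos (θ 2) - u23 * Real.cos (θ 0))
      * (m 1 * m 2 * (Real.sin (θ 1) * Real.sin (θ 2) * Real.sin (φ 1 - φ 2))) = 0 := by
    linear_combination (-(m 1 * u12 * Real.sin (θ 1))) * hB + Real.cos (θ 0) * hφ12
  have G1 : u12 * Real.cos (θ 2) = u23 * Real.cos (θ 0) := by
    have := (mul_eq_zero.mp key1).resolve_right
      (mul_ne_zero (mul_ne_zero hm1 hm2) (mul_ne_zero (mul_ne_zero ha1 ha2) hs12))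
    linarith
  have key2 : (u31 * Real.cos (θ 1) - u12 * Real.cos (θ 2))
      * (m 0 * m 1 * m 2 * (Real.sin (θ 2) * Real.sin (θ 0) * Real.sin (φ 2 - φ 0))) = 0 := by
    linear_combination (m 0 * m 1 * u12 * Real.sin (θ 0)) * hA + (-(m 1 * Real.cos (θ 1))) * hφ13
  have G2 : u31 * Real.cos (θ 1) = u12 * Real.cos (θ 2) := by
    have := (mul_eq_zero.mp key2).resolve_right
      (mul_ne_zero (mul_ne_zero (mul_ne_zero hm0 hm1) hm2)
        (mul_ne_zero (mul_ne_zero ha2 ha0) hs20))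
    linarith
  have Gne : u23 * Real.cos (θ 0) ≠ 0 := by
    intro h
    apply hD
    have hb0 : Real.cos (θ 0) = 0 := by
      rcases mul_eq_zero.mp h with h' | h'
      · exact absurd h' hu23
      · exact h'
    have hb2 : Real.cos (θ 2) = 0 := by
      have h2 : u12 * Real.cos (θ 2) = 0 := by rw [G1, h]
      rcases mul_eq_zero.mp h2 with h' | h'
      · exact absurd h' hu12
      · exact h'
    have hb1 : Real.cos (θ 1) = 0 := by
      have h2 : u31 * Real.cos (θ 1) = 0 := by rw [G2, hb2, mul_zero]
      rcases mul_eq_zero.mp h2 with h' | h'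
      · exact absurd h' hu31
      · exact h'
    rw [hb0, hb1, hb2]; ring
  have hb0 : Real.cos (θ 0) ≠ 0 := fun h => Gne (by rw [h, mul_zero])
  have hb2 : Real.cos (θ 2) ≠ 0 := fun h => Gne (by rw [← G1, h, mul_zero])
  have hb1 : Real.cos (θ 1) ≠ 0 := fun h => Gne (by rw [← G1, ← G2, h, mul_zero])
  refine ⟨?_, ?_, ⟨G1, G1.symm.trans G2.symm, Gne⟩, ?_⟩
  · intro k; fin_cases k
    · exact ha0
    · exact ha1
    · exact ha2
  · intro i j hij
    fin_cases i <;> fin_cases j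
    · exact absurd rfl hij
    · exact hs01
    · exact hs02
    · exact hs10
    · exact absurd rfl hij
    · exact hs12
    · exact hs20
    · exact hs21
    · exact absurd rfl hij
  · intro k; fin_cases k
    · exact hb0
    · exact hb1
    · exact hb2
end

section
/- Let m_1, m_2, m_3 > 0, let three bodies on the unit sphere have spherical coordinates (θ_k, φ_k) with sin θ_k ≠ 0 and cos θ_k ≠ 0 for all k and sin(φ_i − φ_j) ≠ 0 for all pairs i ≠ j, let ω ∈ ℝ, and let u_12, u_23, u_31 be nonzero real numbers of the same strict sign. Assume I_xz = I_yz = 0, i.e., Σ_i m_i sin θ_i cos θ_i cos φ_i = 0 and Σ_i m_i sin θ_i cos θ_i sin φ_i = 0, and that the bodies are not on a common great circle. Then the equations of motion [m_1 m_2 u_12 sin θ_1 sin θ_2 sin(φ_1−φ_2) = m_2 m_3 u_23 sin θ_2 sin θ_3 sin(φ_2−φ_3) = m_3 m_1 u_31 sin θ_3 sin θ_1 sin(φ_3−φ_1), and ω² m_i sin θ_i cos θ_i = Σ_{j≠i} m_i m_j u_ij (sin θ_i cos θ_j − cos θ_i sin θ_j cos(φ_i−φ_j)) for i = 1,2,3]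 hold if and only if u_12/(cos θ_1 cos θ_2) = u_23/(cos θ_2 cos θ_3) = u_31/(cos θ_3 cos θ_1) = ω²/(m_1 cos²θ_1 + m_2 cos²θ_2 + m_3 cos²θ_3). -/
open Real

/-- For a non-collinear configuration with `I_xz = I_yz = 0`, the equations of
motion for a Lagrangian relative equilibrium are equivalent to the chain of
equalities `u_ij/(cos θ_i cos θ_j) = ω²/(Σ_k m_k cos²θ_k)`. -/
theorem LRE_equations_of_motion_equivalent
    (m θ φ : Fin 3 → ℝ) (hm : ∀ k, 0 < m k)
    (hsin : ∀ k, Real.sin (θ k) ≠ 0) (hcos : ∀ k, Real.cos (θ k) ≠ 0)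
    (hφij : ∀ i j, i ≠ j → Real.sin (φ i - φ j) ≠ 0)
    (ω : ℝ) (u12 u23 u31 : ℝ)
    (husign : (0 < u12 ∧ 0 < u23 ∧ 0 < u31) ∨ (u12 < 0 ∧ u23 < 0 ∧ u31 < 0))
    (hIxz : ∑ k, m k * Real.sin (θ k) * Real.cos (θ k) * Real.cos (φ k) = 0)
    (hIyz : ∑ k, m k * Real.sin (θ k) * Real.cos (θ k) * Real.sin (φ k) = 0)
    (p : Fin 3 → Fin 3 → ℝ)
    (hp : ∀ k, p k = ![Real.sin (θ k) * Real.cos (φ k),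
                       Real.sin (θ k) * Real.sin (φ k), Real.cos (θ k)])
    (hindep : LinearIndependent ℝ p) :
    ((m 0 * m 1 * u12 * Real.sin (θ 0) * Real.sin (θ 1) * Real.sin (φ 0 - φ 1)
        = m 1 * m 2 * u23 * Real.sin (θ 1) * Real.sin (θ 2) * Real.sin (φ 1 - φ 2) ∧
      m 1 * m 2 * u23 * Real.sin (θ 1) * Real.sin (θ 2) * Real.sin (φ 1 - φ 2)
        = m 2 * m 0 * u31 * Real.sin (θ 2) * Real.sin (θ 0) * Real.sin (φ 2 - φ 0) ∧
      ω ^ 2 * (m 0 * Real.sin (θ 0) * Real.cos (θ 0))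
        = m 0 * m 1 * u12 * (Real.sin (θ 0) * Real.cos (θ 1)
            - Real.cos (θ 0) * Real.sin (θ 1) * Real.cos (φ 0 - φ 1))
          + m 0 * m 2 * u31 * (Real.sin (θ 0) * Real.cos (θ 2)
            - Real.cos (θ 0) * Real.sin (θ 2) * Real.cos (φ 0 - φ 2)) ∧
      ω ^ 2 * (m 1 * Real.sin (θ 1) * Real.cos (θ 1))
        = m 1 * m 0 * u12 * (Real.sin (θ 1) * Real.cos (θ 0)
            - Real.cos (θ 1) * Real.sin (θ 0) * Real.cos (φ 1 - φ 0))
          + m 1 * m 2 * u23 * (Real.sin (θ 1) * Real.cos (θ 2)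
            - Real.cos (θ 1) * Real.sin (θ 2) * Real.cos (φ 1 - φ 2)) ∧
      ω ^ 2 * (m 2 * Real.sin (θ 2) * Real.cos (θ 2))
        = m 2 * m 0 * u31 * (Real.sin (θ 2) * Real.cos (θ 0)
            - Real.cos (θ 2) * Real.sin (θ 0) * Real.cos (φ 2 - φ 0))
          + m 2 * m 1 * u23 * (Real.sin (θ 2) * Real.cos (θ 1)
            - Real.cos (θ 2) * Real.sin (θ 1) * Real.cos (φ 2 - φ 1)))
    ↔
      (u12 / (Real.cos (θ 0) * Real.cos (θ 1)) = u23 / (Real.cos (θ 1) * Real.cos (θ 2)) ∧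
       u23 / (Real.cos (θ 1) * Real.cos (θ 2)) = u31 / (Real.cos (θ 2) * Real.cos (θ 0)) ∧
       u31 / (Real.cos (θ 2) * Real.cos (θ 0))
         = ω ^ 2 / (m 0 * Real.cos (θ 0) ^ 2 + m 1 * Real.cos (θ 1) ^ 2
            + m 2 * Real.cos (θ 2) ^ 2))) := by
  clear husign hp hindep
  simp only [Fin.sum_univ_three] at hIxz hIyz
  have hm0 := (hm 0).ne'
  have hm1 := (hm 1).ne'
  have hm2 := (hm 2).ne'
  have hs0 := hsin 0
  have hs1 := hsin 1
  have hs2 := hsin 2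
  have hc0 := hcos 0
  have hc1 := hcos 1
  have hc2 := hcos 2
  have hsin01 := hφij 0 1 (by decide)
  have hsin12 := hφij 1 2 (by decide)
  have hsin20 := hφij 2 0 (by decide)
  have hC2 : m 1 * m 2 * Real.sin (θ 1) * Real.sin (θ 2) * Real.cos (θ 1) * Real.cos (θ 2) * Real.sin (φ 1 - φ 2)
      = m 0 * m 1 * Real.sin (θ 0) * Real.sin (θ 1) * Real.cos (θ 0) * Real.cos (θ 1) * Real.sin (φ 0 - φ 1) := by
    simp only [Real.sin_sub]
    linear_combination (m 1 * Real.sin (θ 1) * Real.cos (θ 1) * Real.sin (φ 1)) * hIxz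
      - (m 1 * Real.sin (θ 1) * Real.cos (θ 1) * Real.cos (φ 1)) * hIyz
  have hC3 : m 2 * m 0 * Real.sin (θ 2) * Real.sin (θ 0) * Real.cos (θ 2) * Real.cos (θ 0) * Real.sin (φ 2 - φ 0)
      = m 0 * m 1 * Real.sin (θ 0) * Real.sin (θ 1) * Real.cos (θ 0) * Real.cos (θ 1) * Real.sin (φ 0 - φ 1) := by
    simp only [Real.sin_sub]
    linear_combination (-(m 0 * Real.sin (θ 0) * Real.cos (θ 0) * Real.sin (φ 0))) * hIxz
      + (m 0 * Real.sin (θ 0) * Real.cos (θ 0) * Real.cos (φ 0)) * hIyz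
  have hcosA : m 1 * Real.sin (θ 1) * Real.cos (θ 1) * Real.cos (φ 0 - φ 1) + m 2 * Real.sin (θ 2) * Real.cos (θ 2) * Real.cos (φ 0 - φ 2)
      = -(m 0 * Real.sin (θ 0) * Real.cos (θ 0)) := by
    simp only [Real.cos_sub]
    linear_combination Real.cos (φ 0) * hIxz + Real.sin (φ 0) * hIyz
      - (m 0 * Real.sin (θ 0) * Real.cos (θ 0)) * Real.sin_sq_add_cos_sq (φ 0)
  have hcosB : m 0 * Real.sin (θ 0) * Real.cos (θ 0) * Real.cos (φ 1 - φ 0) + m 2 * Real.sin (θ 2) * Real.cos (θ 2) * Real.cos (φ 1 - φ 2)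
      = -(m 1 * Real.sin (θ 1) * Real.cos (θ 1)) := by
    simp only [Real.cos_sub]
    linear_combination Real.cos (φ 1) * hIxz + Real.sin (φ 1) * hIyz
      - (m 1 * Real.sin (θ 1) * Real.cos (θ 1)) * Real.sin_sq_add_cos_sq (φ 1)
  have hcosC : m 0 * Real.sin (θ 0) * Real.cos (θ 0) * Real.cos (φ 2 - φ 0) + m 1 * Real.sin (θ 1) * Real.cos (θ 1) * Real.cos (φ 2 - φ 1)
      = -(m 2 * Real.sin (θ 2) * Real.cos (θ 2)) := by
    simp only [Real.cos_sub]
    linear_combination Real.cos (φ 2) * hIxz + Real.sin (φ 2) * hIyz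
      - (m 2 * Real.sin (θ 2) * Real.cos (θ 2)) * Real.sin_sq_add_cos_sq (φ 2)
  have hCne : m 0 * m 1 * Real.sin (θ 0) * Real.sin (θ 1) * Real.cos (θ 0) * Real.cos (θ 1) * Real.sin (φ 0 - φ 1) ≠ 0 :=
    mul_ne_zero (mul_ne_zero (mul_ne_zero (mul_ne_zero (mul_ne_zero (mul_ne_zero hm0 hm1) hs0) hs1) hc0) hc1) hsin01
  have hc01 : Real.cos (θ 0) * Real.cos (θ 1) ≠ 0 := mul_ne_zero hc0 hc1
  have hc12 : Real.cos (θ 1) * Real.cos (θ 2) ≠ 0 := mul_ne_zero hc1 hc2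
  have hc20 : Real.cos (θ 2) * Real.cos (θ 0) ≠ 0 := mul_ne_zero hc2 hc0
  have hMpos : (0:ℝ) < (m 0 * Real.cos (θ 0) ^ 2 + m 1 * Real.cos (θ 1) ^ 2 + m 2 * Real.cos (θ 2) ^ 2) := by
    have h0 := mul_pos (hm 0) (pow_two_pos_of_ne_zero hc0)
    have h1 := mul_pos (hm 1) (pow_two_pos_of_ne_zero hc1)
    have h2 := mul_pos (hm 2) (pow_two_pos_of_ne_zero hc2)
    linarith
  have hMne : (m 0 * Real.cos (θ 0) ^ 2 + m 1 * Real.cos (θ 1) ^ 2 + m 2 * Real.cos (θ 2) ^ 2) ≠ 0 := ne_of_gt hMpos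
  constructor
  · rintro ⟨h1, h2, h3, -, -⟩
    have hA : u12 * Real.cos (θ 2) = u23 * Real.cos (θ 0) := mul_right_cancel₀ hCne (by
      linear_combination (Real.cos (θ 0) * Real.cos (θ 1) * Real.cos (θ 2)) * h1 + (u23 * Real.cos (θ 0)) * hC2)
    have hB : u23 * Real.cos (θ 0) = u31 * Real.cos (θ 1) := mul_right_cancel₀ hCne (by
      linear_combination (Real.cos (θ 0) * Real.cos (θ 1) * Real.cos (θ 2)) * h2 - (u23 * Real.cos (θ 0)) * hC2
        + (u31 * Real.cos (θ 1)) * hC3)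
    have hAB : u12 * Real.cos (θ 2) = u31 * Real.cos (θ 1) := hA.trans hB
    have hne : m 0 * Real.sin (θ 0) * Real.cos (θ 1) ≠ 0 := mul_ne_zero (mul_ne_zero hm0 hs0) hc1
    have hD : u31 * (m 0 * Real.cos (θ 0) ^ 2 + m 1 * Real.cos (θ 1) ^ 2 + m 2 * Real.cos (θ 2) ^ 2) = ω ^ 2 * (Real.cos (θ 2) * Real.cos (θ 0)) := mul_right_cancel₀ hne (by
      linear_combination (-(Real.cos (θ 1) * Real.cos (θ 2))) * h3
        + (-(m 0 * m 1 * Real.cos (θ 1) * (Real.sin (θ 0) * Real.cos (θ 1) - Real.cos (θ 0) * Real.sin (θ 1) * Real.cos (φ 0 - φ 1)))) * hAB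
        + (m 0 * u31 * Real.cos (θ 1) * Real.cos (θ 0)) * hcosA)
    refine ⟨?_, ?_, ?_⟩
    · rw [div_eq_div_iff hc01 hc12]
      linear_combination Real.cos (θ 1) * hA
    · rw [div_eq_div_iff hc12 hc20]
      linear_combination Real.cos (θ 2) * hB
    · rw [div_eq_div_iff hc20 hMne]
      exact hD
  · rintro ⟨g1, g2, g3⟩
    rw [div_eq_div_iff hc01 hc12] at g1
    rw [div_eq_div_iff hc12 hc20] at g2
    rw [div_eq_div_iff hc20 hMne] at g3
    have hA : u12 * Real.cos (θ 2) = u23 * Real.cos (θ 0) := mul_right_cancel₀ hc1 (by linear_combination g1)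
    have hB : u23 * Real.cos (θ 0) = u31 * Real.cos (θ 1) := mul_right_cancel₀ hc2 (by linear_combination g2)
    have hu31 : u31 * (m 0 * Real.cos (θ 0) ^ 2 + m 1 * Real.cos (θ 1) ^ 2 + m 2 * Real.cos (θ 2) ^ 2) = ω ^ 2 * (Real.cos (θ 2) * Real.cos (θ 0)) := g3
    have hu23 : u23 * (m 0 * Real.cos (θ 0) ^ 2 + m 1 * Real.cos (θ 1) ^ 2 + m 2 * Real.cos (θ 2) ^ 2) = ω ^ 2 * (Real.cos (θ 1) * Real.cos (θ 2)) := mul_right_cancel₀ hc0 (by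
      linear_combination (m 0 * Real.cos (θ 0) ^ 2 + m 1 * Real.cos (θ 1) ^ 2 + m 2 * Real.cos (θ 2) ^ 2) * hB + Real.cos (θ 1) * g3)
    have hu12 : u12 * (m 0 * Real.cos (θ 0) ^ 2 + m 1 * Real.cos (θ 1) ^ 2 + m 2 * Real.cos (θ 2) ^ 2) = ω ^ 2 * (Real.cos (θ 0) * Real.cos (θ 1)) := mul_right_cancel₀ hc2 (by
      linear_combination (m 0 * Real.cos (θ 0) ^ 2 + m 1 * Real.cos (θ 1) ^ 2 + m 2 * Real.cos (θ 2) ^ 2) * hA + (m 0 * Real.cos (θ 0) ^ 2 + m 1 * Real.cos (θ 1) ^ 2 + m 2 * Real.cos (θ 2) ^ 2) * hB + Real.cos (θ 1) * g3)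
    refine ⟨?_, ?_, ?_, ?_, ?_⟩
    · exact mul_right_cancel₀ hMne (by
        linear_combination (m 0 * m 1 * Real.sin (θ 0) * Real.sin (θ 1) * Real.sin (φ 0 - φ 1)) * hu12
          - (m 1 * m 2 * Real.sin (θ 1) * Real.sin (θ 2) * Real.sin (φ 1 - φ 2)) * hu23
          - ω ^ 2 * hC2)
    · exact mul_right_cancel₀ hMne (by
        linear_combination (m 1 * m 2 * Real.sin (θ 1) * Real.sin (θ 2) * Real.sin (φ 1 - φ 2)) * hu23
          - (m 2 * m 0 * Real.sin (θ 2) * Real.sin (θ 0) * Real.sin (φ 2 - φ 0)) * hu31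
          + ω ^ 2 * hC2 - ω ^ 2 * hC3)
    · exact mul_right_cancel₀ hMne (by
        linear_combination (-(m 0 * m 1 * (Real.sin (θ 0) * Real.cos (θ 1) - Real.cos (θ 0) * Real.sin (θ 1) * Real.cos (φ 0 - φ 1)))) * hu12
          - (m 0 * m 2 * (Real.sin (θ 0) * Real.cos (θ 2) - Real.cos (θ 0) * Real.sin (θ 2) * Real.cos (φ 0 - φ 2))) * hu31
          + ω ^ 2 * m 0 * Real.cos (θ 0) ^ 2 * hcosA)
    · exact mul_right_cancel₀ hMne (by
        linear_combination (-(m 1 * m 0 * (Real.sin (θ 1) * Real.cos (θ 0) - Real.cos (θ 1) * Real.sin (θ 0) * Real.cos (φ 1 - φ 0)))) * hu12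
          - (m 1 * m 2 * (Real.sin (θ 1) * Real.cos (θ 2) - Real.cos (θ 1) * Real.sin (θ 2) * Real.cos (φ 1 - φ 2))) * hu23
          + ω ^ 2 * m 1 * Real.cos (θ 1) ^ 2 * hcosB)
    · exact mul_right_cancel₀ hMne (by
        linear_combination (-(m 2 * m 0 * (Real.sin (θ 2) * Real.cos (θ 0) - Real.cos (θ 2) * Real.sin (θ 0) * Real.cos (φ 2 - φ 0)))) * hu31
          - (m 2 * m 1 * (Real.sin (θ 2) * Real.cos (θ 1) - Real.cos (θ 2) * Real.sin (θ 1) * Real.cos (φ 2 - φ 1))) * hu23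
          + ω ^ 2 * m 2 * Real.cos (θ 2) ^ 2 * hcosC)
end

section
/- Let m_1, m_2, m_3 > 0, let three bodies on the unit sphere have spherical coordinates (θ_k, φ_k) satisfying I_xz = I_yz = 0 (i.e., Σ_k m_k sin θ_k cos θ_k cos φ_k = 0 and Σ_k m_k sin θ_k cos θ_k sin φ_k = 0), let u_12, u_23, u_31 be nonzero reals, and suppose u_12 cos θ_3 = u_23 cos θ_1 = u_31 cos θ_2 = δ with δ ≠ 0. Define cos σ_ij = cos θ_i cos θ_j + sin θ_i sin θ_j cos(φ_i − φ_j) and let J be the 3×3 symmetric matrix with diagonal (m_2+m_3, m_3+m_1, m_1+m_2) and off-diagonal entries −√(m_i m_j) cos σ_ij. Then the nonzero vector Ψ_L = (√m_1/u_23, √m_2/u_31, √m_3/u_12)ᵀ is an eigenvector of J with eigenvalue Σ_ℓ m_ℓ sin²θ_ℓ. That is, the rotation axis of a Lagrangian relative equilibrium is the principal axis of the inertia tensor corresponding to Ψ_L. -/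
open Real Matrix

lemma LRE_row_identity (m0 m1 m2 s0 s1 s2 c0 c1 c2 f0 f1 f2 g0 g1 g2 lam : ℝ)
    (p1 : s1^2 + c1^2 = 1) (p2 : s2^2 + c2^2 = 1) (pf0 : f0^2 + g0^2 = 1)
    (e1 : m0*s0*c0*f0 + m1*s1*c1*f1 + m2*s2*c2*f2 = 0)
    (e2 : m0*s0*c0*g0 + m1*s1*c1*g1 + m2*s2*c2*g2 = 0)
    (hlam : lam = m0*s0^2 + m1*s1^2 + m2*s2^2) :
    (m1+m2)*c0 - m1*(c0*c1 + s0*s1*(f0*f1+g0*g1))*c1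
      - m2*(c0*c2 + s0*s2*(f0*f2+g0*g2))*c2 = lam*c0 := by
  subst hlam
  linear_combination (-(m1*c0))*p1 + (-(m2*c0))*p2 + (-(s0*f0))*e1 + (-(s0*g0))*e2
    + (m0*s0^2*c0)*pf0

/-- The rotation axis of a Lagrangian relative equilibrium corresponds to the
eigenvector `Ψ_L = (√m_1/u_23, √m_2/u_31, √m_3/u_12)ᵀ` of `J`, with
eigenvalue `Σ_ℓ m_ℓ sin²θ_ℓ`. -/
theorem LRE_rotation_axis_eigenvector
    (m θ φ : Fin 3 → ℝ) (hm : ∀ k, 0 < m k)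
    (u12 u23 u31 : ℝ) (hu12 : u12 ≠ 0) (hu23 : u23 ≠ 0) (hu31 : u31 ≠ 0)
    (δ : ℝ) (hδ : δ ≠ 0)
    (h12 : u12 * Real.cos (θ 2) = δ) (h23 : u23 * Real.cos (θ 0) = δ)
    (h31 : u31 * Real.cos (θ 1) = δ)
    (hIxz : ∑ k, m k * Real.sin (θ k) * Real.cos (θ k) * Real.cos (φ k) = 0)
    (hIyz : ∑ k, m k * Real.sin (θ k) * Real.cos (θ k) * Real.sin (φ k) = 0)
    (c : Fin 3 → Fin 3 → ℝ)
    (hc : ∀ i j, c i j = Real.cos (θ i) * Real.cos (θ j)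
      + Real.sin (θ i) * Real.sin (θ j) * Real.cos (φ i - φ j))
    (J : Matrix (Fin 3) (Fin 3) ℝ)
    (hJ : J = !![m 1 + m 2, -Real.sqrt (m 0 * m 1) * c 0 1, -Real.sqrt (m 0 * m 2) * c 0 2;
                 -Real.sqrt (m 1 * m 0) * c 1 0, m 2 + m 0, -Real.sqrt (m 1 * m 2) * c 1 2;
                 -Real.sqrt (m 2 * m 0) * c 2 0, -Real.sqrt (m 2 * m 1) * c 2 1, m 0 + m 1])
    (ΨL : Fin 3 → ℝ)
    (hΨL : ΨL = ![Real.sqrt (m 0) / u23, Real.sqrt (m 1) / u31, Real.sqrt (m 2) / u12]) :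
    ΨL ≠ 0 ∧ J.mulVec ΨL = (∑ k, m k * Real.sin (θ k) ^ 2) • ΨL := by
  have hsq : ∀ k, Real.sqrt (m k) * Real.sqrt (m k) = m k :=
    fun k => Real.mul_self_sqrt (hm k).le
  have hmul : ∀ i j, Real.sqrt (m i * m j) = Real.sqrt (m i) * Real.sqrt (m j) :=
    fun i j => Real.sqrt_mul (hm i).le _
  have hma : ∀ k, Real.sqrt (m k) ≠ 0 := fun k => (Real.sqrt_pos.mpr (hm k)).ne'
  have p : ∀ k, Real.sin (θ k)^2 + Real.cos (θ k)^2 = 1 :=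
    fun k => Real.sin_sq_add_cos_sq _
  have pf : ∀ k, Real.cos (φ k)^2 + Real.sin (φ k)^2 = 1 :=
    fun k => Real.cos_sq_add_sin_sq _
  rw [Fin.sum_univ_three] at hIxz hIyz
  have e1 : (Real.sqrt (m 0) * Real.sqrt (m 0)) * Real.sin (θ 0) * Real.cos (θ 0) * Real.cos (φ 0)
      + (Real.sqrt (m 1) * Real.sqrt (m 1)) * Real.sin (θ 1) * Real.cos (θ 1) * Real.cos (φ 1)
      + (Real.sqrt (m 2) * Real.sqrt (m 2)) * Real.sin (θ 2) * Real.cos (θ 2) * Real.cos (φ 2) = 0 := by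
    linear_combination hIxz + (Real.sin (θ 0) * Real.cos (θ 0) * Real.cos (φ 0)) * hsq 0
      + (Real.sin (θ 1) * Real.cos (θ 1) * Real.cos (φ 1)) * hsq 1
      + (Real.sin (θ 2) * Real.cos (θ 2) * Real.cos (φ 2)) * hsq 2
  have e2 : (Real.sqrt (m 0) * Real.sqrt (m 0)) * Real.sin (θ 0) * Real.cos (θ 0) * Real.sin (φ 0)
      + (Real.sqrt (m 1) * Real.sqrt (m 1)) * Real.sin (θ 1) * Real.cos (θ 1) * Real.sin (φ 1)
      + (Real.sqrt (m 2) * Real.sqrt (m 2)) * Real.sin (θ 2) * Real.cos (θ 2) * Real.sin (φ 2) = 0 := by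
    linear_combination hIyz + (Real.sin (θ 0) * Real.cos (θ 0) * Real.sin (φ 0)) * hsq 0
      + (Real.sin (θ 1) * Real.cos (θ 1) * Real.sin (φ 1)) * hsq 1
      + (Real.sin (θ 2) * Real.cos (θ 2) * Real.sin (φ 2)) * hsq 2
  have hlam : m 0 * Real.sin (θ 0)^2 + m 1 * Real.sin (θ 1)^2 + m 2 * Real.sin (θ 2)^2
      = (Real.sqrt (m 0) * Real.sqrt (m 0)) * Real.sin (θ 0)^2
      + (Real.sqrt (m 1) * Real.sqrt (m 1)) * Real.sin (θ 1)^2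
      + (Real.sqrt (m 2) * Real.sqrt (m 2)) * Real.sin (θ 2)^2 := by
    linear_combination (-(Real.sin (θ 0)^2)) * hsq 0 + (-(Real.sin (θ 1)^2)) * hsq 1
      + (-(Real.sin (θ 2)^2)) * hsq 2
  have key0 := LRE_row_identity (Real.sqrt (m 0) * Real.sqrt (m 0))
    (Real.sqrt (m 1) * Real.sqrt (m 1)) (Real.sqrt (m 2) * Real.sqrt (m 2))
    (Real.sin (θ 0)) (Real.sin (θ 1)) (Real.sin (θ 2))
    (Real.cos (θ 0)) (Real.cos (θ 1)) (Real.cos (θ 2))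
    (Real.cos (φ 0)) (Real.cos (φ 1)) (Real.cos (φ 2))
    (Real.sin (φ 0)) (Real.sin (φ 1)) (Real.sin (φ 2)) _
    (p 1) (p 2) (pf 0) e1 e2 hlam
  have key1 := LRE_row_identity (Real.sqrt (m 1) * Real.sqrt (m 1))
    (Real.sqrt (m 2) * Real.sqrt (m 2)) (Real.sqrt (m 0) * Real.sqrt (m 0))
    (Real.sin (θ 1)) (Real.sin (θ 2)) (Real.sin (θ 0))
    (Real.cos (θ 1)) (Real.cos (θ 2)) (Real.cos (θ 0))
    (Real.cos (φ 1)) (Real.cos (φ 2)) (Real.cos (φ 0))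
    (Real.sin (φ 1)) (Real.sin (φ 2)) (Real.sin (φ 0))
    (m 0 * Real.sin (θ 0)^2 + m 1 * Real.sin (θ 1)^2 + m 2 * Real.sin (θ 2)^2)
    (p 2) (p 0) (pf 1) (by linear_combination e1) (by linear_combination e2)
    (by linear_combination hlam)
  have key2 := LRE_row_identity (Real.sqrt (m 2) * Real.sqrt (m 2))
    (Real.sqrt (m 0) * Real.sqrt (m 0)) (Real.sqrt (m 1) * Real.sqrt (m 1))
    (Real.sin (θ 2)) (Real.sin (θ 0)) (Real.sin (θ 1))
    (Real.cos (θ 2)) (Real.cos (θ 0)) (Real.cos (θ 1))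
    (Real.cos (φ 2)) (Real.cos (φ 0)) (Real.cos (φ 1))
    (Real.sin (φ 2)) (Real.sin (φ 0)) (Real.sin (φ 1))
    (m 0 * Real.sin (θ 0)^2 + m 1 * Real.sin (θ 1)^2 + m 2 * Real.sin (θ 2)^2)
    (p 0) (p 1) (pf 2) (by linear_combination e1) (by linear_combination e2)
    (by linear_combination hlam)
  have d0 : Real.sqrt (m 0) / u23 = Real.sqrt (m 0) * Real.cos (θ 0) / δ := by
    rw [div_eq_div_iff hu23 hδ]; linear_combination (-Real.sqrt (m 0)) * h23
  have d1 : Real.sqrt (m 1) / u31 = Real.sqrt (m 1) * Real.cos (θ 1) / δ := by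
    rw [div_eq_div_iff hu31 hδ]; linear_combination (-Real.sqrt (m 1)) * h31
  have d2 : Real.sqrt (m 2) / u12 = Real.sqrt (m 2) * Real.cos (θ 2) / δ := by
    rw [div_eq_div_iff hu12 hδ]; linear_combination (-Real.sqrt (m 2)) * h12
  refine ⟨?_, ?_⟩
  · intro h
    have h0 := congrFun h 0
    rw [hΨL] at h0
    simp at h0
    exact h0.elim (hma 0) hu23
  · funext i
    fin_cases i <;>
      simp [hJ, hΨL, Matrix.mulVec, dotProduct, Fin.sum_univ_three, hc, Real.cos_sub,
        hmul, d0, d1, d2]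
    · linear_combination (Real.sqrt (m 0) / δ) * key0
        - (Real.sqrt (m 0) * Real.cos (θ 0) / δ) * hsq 1
        - (Real.sqrt (m 0) * Real.cos (θ 0) / δ) * hsq 2
    · linear_combination (Real.sqrt (m 1) / δ) * key1
        - (Real.sqrt (m 1) * Real.cos (θ 1) / δ) * hsq 2
        - (Real.sqrt (m 1) * Real.cos (θ 1) / δ) * hsq 0
    · linear_combination (Real.sqrt (m 2) / δ) * key2
        - (Real.sqrt (m 2) * Real.cos (θ 2) / δ) * hsq 0
        - (Real.sqrt (m 2) * Real.cos (θ 2) / δ) * hsq 1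
end

section
/- Let m_1, m_2, m_3 > 0, let θ_1, θ_2, θ_3 ∈ ℝ with cos θ_k ≠ 0 for all k, let u_12, u_23, u_31 ∈ ℝ and ω ∈ ℝ, and suppose u_12/(cos θ_1 cos θ_2) = u_23/(cos θ_2 cos θ_3) = u_31/(cos θ_3 cos θ_1) = ω²/(m_1 cos²θ_1 + m_2 cos²θ_2 + m_3 cos²θ_3). Then the angular velocity satisfies ω² = u_12 · u_23 · u_31 · ( m_1/u_23² + m_2/u_31² + m_3/u_12² ). -/
open Real

/-!
Write `λ` for the common value of the four quotients. Clearing denominators gives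
`u_ij = λ cos θ_i cos θ_j` and `ω² = λ Σ m_k cos² θ_k` (the mass-weighted sum is positive),
and substituting the first three into the right-hand side makes the cosines cancel to the second.
-/

lemma mul_mul_mul_sum_div_sq_eq (l c1 c2 c3 m1 m2 m3 : ℝ)
    (hc1 : c1 ≠ 0) (hc2 : c2 ≠ 0) (hc3 : c3 ≠ 0) :
    l * (c1 * c2) * (l * (c2 * c3)) * (l * (c3 * c1)) *
        (m1 / (l * (c2 * c3)) ^ 2 + m2 / (l * (c3 * c1)) ^ 2 + m3 / (l * (c1 * c2)) ^ 2) =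
      l * (m1 * c1 ^ 2 + m2 * c2 ^ 2 + m3 * c3 ^ 2) := by
  rcases eq_or_ne l 0 with rfl | hl
  · simp
  · field_simp

/-- Formula for the angular velocity of a Lagrangian relative equilibrium:
`ω² = u_12 u_23 u_31 (m_1/u_23² + m_2/u_31² + m_3/u_12²)`. -/
theorem LRE_angular_velocity
    (m1 m2 m3 θ1 θ2 θ3 u12 u23 u31 ω : ℝ)
    (hm1 : 0 < m1) (hm2 : 0 < m2) (hm3 : 0 < m3)
    (hc1 : Real.cos θ1 ≠ 0) (hc2 : Real.cos θ2 ≠ 0) (hc3 : Real.cos θ3 ≠ 0)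
    (h12 : u12 / (Real.cos θ1 * Real.cos θ2) = u23 / (Real.cos θ2 * Real.cos θ3))
    (h23 : u23 / (Real.cos θ2 * Real.cos θ3) = u31 / (Real.cos θ3 * Real.cos θ1))
    (h31 : u31 / (Real.cos θ3 * Real.cos θ1)
      = ω ^ 2 / (m1 * Real.cos θ1 ^ 2 + m2 * Real.cos θ2 ^ 2 + m3 * Real.cos θ3 ^ 2)) :
    ω ^ 2 = u12 * u23 * u31 * (m1 / u23 ^ 2 + m2 / u31 ^ 2 + m3 / u12 ^ 2) := by
  set M := m1 * cos θ1 ^ 2 + m2 * cos θ2 ^ 2 + m3 * cos θ3 ^ 2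
  have hM : M ≠ 0 := by positivity
  set l := ω ^ 2 / M
  have hu31 : u31 = l * (cos θ3 * cos θ1) := (div_eq_iff (mul_ne_zero hc3 hc1)).1 h31
  have hu23 : u23 = l * (cos θ2 * cos θ3) := (div_eq_iff (mul_ne_zero hc2 hc3)).1 (h23.trans h31)
  have hu12 : u12 = l * (cos θ1 * cos θ2) :=
    (div_eq_iff (mul_ne_zero hc1 hc2)).1 (h12.trans (h23.trans h31))
  rw [hu12, hu23, hu31, mul_mul_mul_sum_div_sq_eq l _ _ _ m1 m2 m3 hc1 hc2 hc3,
    div_mul_cancel₀ _ hM]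
end

section
/- Let m_1, m_2, m_3 > 0, let cos σ_12, cos σ_23, cos σ_31 ∈ ℝ, let u_12, u_23, u_31 > 0, and let J be the 3×3 symmetric matrix with diagonal (m_2+m_3, m_3+m_1, m_1+m_2) and off-diagonal entries −√(m_i m_j) cos σ_ij. Set M = m_1 + m_2 + m_3. Then the following are equivalent: (a) there exist c_1, c_2, c_3 > 0 and ω ∈ ℝ such that, with w = (√m_1 c_1, √m_2 c_2, √m_3 c_3)ᵀ, one has J w = (M − Σ_k m_k c_k²) w and u_12/(c_1 c_2) = u_23/(c_2 c_3) = u_31/(c_3 c_1) = ω²/(Σ_k m_k c_k²); (b) the vector Ψ_L = (√m_1/u_23, √m_2/u_31, √m_3/u_12)ᵀ is an eigenvector of J with eigenvalue λ < M. (Here c_k plays the role of cos θ_k, so this is the necessary and sufficient condition for a shape σ_ij with potential-derivative values u_ij to form a Lagrangian relative equilibrium.) -/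
open Real Matrix

/-!
Both conditions say that `w = (√m_k c_k)` and `Ψ_L` are positive multiples of each other. Clearing
denominators, the equal-ratio conditions read `u_23 c_1 = u_31 c_2 = u_12 c_3`, i.e.
`c = s • (1/u_23, 1/u_31, 1/u_12)` with `s > 0`. An eigen-relation is invariant under nonzero
rescaling, and the eigenvalue `M - Σ m_k c_k²` is `< M` exactly because the weighted sum is positive;
conversely `s` is chosen so that this weighted sum equals `M - λ`, and `ω` is then read off the last
ratio.
-/

theorem div_mul_eq_div_mul_iff {K : Type*} [Field K] {a b x y z : K}
    (hx : x ≠ 0) (hy : y ≠ 0) (hz : z ≠ 0) :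
    a / (x * y) = b / (y * z) ↔ a * z = b * x := by
  rw [div_eq_div_iff (mul_ne_zero hx hy) (mul_ne_zero hy hz)]
  constructor
  · intro h
    apply mul_right_cancel₀ hy
    linear_combination h
  · intro h
    linear_combination y * h

theorem Matrix.mulVec_smul_eq_smul_smul_iff {n K : Type*} [Fintype n] [Field K]
    (A : Matrix n n K) (v : n → K) {μ t : K} (ht : t ≠ 0) :
    A *ᵥ (t • v) = μ • t • v ↔ A *ᵥ v = μ • v := by
  rw [mulVec_smul, smul_comm μ t, (smul_right_injective (n → K) ht).eq_iff]

theorem vec3_mul_div_eq_smul {K : Type*} [Field K] (x y z a b c s : K) :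
    ![x * (s / a), y * (s / b), z * (s / c)] = s • ![x / a, y / b, z / c] := by
  ext i
  fin_cases i <;> simp <;> ring

theorem vec3_eq_smul_of_div_mul_eq_div_mul {K : Type*} [Field K] {x y z c1 c2 c3 u12 u23 u31 : K}
    (hc1 : c1 ≠ 0) (hc2 : c2 ≠ 0) (hc3 : c3 ≠ 0) (hu12 : u12 ≠ 0) (hu23 : u23 ≠ 0) (hu31 : u31 ≠ 0)
    (h12 : u12 / (c1 * c2) = u23 / (c2 * c3)) (h23 : u23 / (c2 * c3) = u31 / (c3 * c1)) :
    ![x * c1, y * c2, z * c3] = (u23 * c1) • ![x / u23, y / u31, z / u12] := by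
  rw [div_mul_eq_div_mul_iff hc1 hc2 hc3] at h12
  rw [div_mul_eq_div_mul_iff hc2 hc3 hc1] at h23
  have hc2' : u23 * c1 / u31 = c2 := by rw [div_eq_iff hu31, h23, mul_comm]
  have hc3' : u23 * c1 / u12 = c3 := by rw [div_eq_iff hu12, ← h12, mul_comm]
  rw [← vec3_mul_div_eq_smul, mul_div_cancel_left₀ _ hu23, hc2', hc3']

theorem exists_pos_sum_mul_div_sq_eq {a b c p q r S : ℝ} (ha : 0 < a) (hb : 0 < b) (hc : 0 < c)
    (hp : 0 < p) (hq : 0 < q) (hr : 0 < r) (hS : 0 < S) :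
    ∃ s > 0, a * (s / p) ^ 2 + b * (s / q) ^ 2 + c * (s / r) ^ 2 = S := by
  set Q := a / p ^ 2 + b / q ^ 2 + c / r ^ 2
  have hQ : 0 < Q := by positivity
  have hSQ : 0 < S / Q := div_pos hS hQ
  refine ⟨√(S / Q), sqrt_pos.2 hSQ, ?_⟩
  calc _ = √(S / Q) ^ 2 * Q := by ring
    _ = S := by rw [sq_sqrt hSQ.le, div_mul_cancel₀ _ hQ.ne']

theorem shape_condition_for_LRE_general
    (m : Fin 3 → ℝ) (hm : ∀ k, 0 < m k)
    (u12 u23 u31 : ℝ)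
    (hu12 : 0 < u12) (hu23 : 0 < u23) (hu31 : 0 < u31)
    (J : Matrix (Fin 3) (Fin 3) ℝ)
    (M : ℝ) :
    (∃ c1 c2 c3 ω : ℝ, 0 < c1 ∧ 0 < c2 ∧ 0 < c3 ∧
      J.mulVec ![Real.sqrt (m 0) * c1, Real.sqrt (m 1) * c2, Real.sqrt (m 2) * c3]
        = (M - (m 0 * c1 ^ 2 + m 1 * c2 ^ 2 + m 2 * c3 ^ 2)) •
          ![Real.sqrt (m 0) * c1, Real.sqrt (m 1) * c2, Real.sqrt (m 2) * c3] ∧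
      u12 / (c1 * c2) = u23 / (c2 * c3) ∧
      u23 / (c2 * c3) = u31 / (c3 * c1) ∧
      u31 / (c3 * c1) = ω ^ 2 / (m 0 * c1 ^ 2 + m 1 * c2 ^ 2 + m 2 * c3 ^ 2))
    ↔
    (∃ lam : ℝ, lam < M ∧
      J.mulVec ![Real.sqrt (m 0) / u23, Real.sqrt (m 1) / u31, Real.sqrt (m 2) / u12]
        = lam • ![Real.sqrt (m 0) / u23, Real.sqrt (m 1) / u31, Real.sqrt (m 2) / u12]) := by
  have := hm 0; have := hm 1; have := hm 2
  constructor
  · rintro ⟨c1, c2, c3, -, hc1, hc2, hc3, heig, h12, h23, -⟩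
    rw [vec3_eq_smul_of_div_mul_eq_div_mul hc1.ne' hc2.ne' hc3.ne' hu12.ne' hu23.ne' hu31.ne' h12 h23,
      mulVec_smul_eq_smul_smul_iff _ _ (by positivity)] at heig
    exact ⟨_, by linarith [show 0 < m 0 * c1 ^ 2 + m 1 * c2 ^ 2 + m 2 * c3 ^ 2 by positivity], heig⟩
  · rintro ⟨lam, hlam, heig⟩
    have hS : 0 < M - lam := by linarith
    obtain ⟨s, hs, hsS⟩ := exists_pos_sum_mul_div_sq_eq (hm 0) (hm 1) (hm 2) hu23 hu31 hu12 hS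
    refine ⟨s / u23, s / u31, s / u12, √((M - lam) * (u12 * u23 * u31)) / s,
      by positivity, by positivity, by positivity, ?_, ?_, ?_, ?_⟩
    · rw [hsS, sub_sub_cancel, vec3_mul_div_eq_smul, mulVec_smul_eq_smul_smul_iff _ _ hs.ne']
      exact heig
    · field_simp
    · field_simp
    · rw [hsS, div_pow, sq_sqrt (by positivity)]
      field_simp

/-- Necessary and sufficient condition for a shape to form a Lagrangian
relative equilibrium: the configuration data `(c_k, ω)` exists if and only if
`Ψ_L = (√m_1/u_23, √m_2/u_31, √m_3/u_12)ᵀ` is an eigenvector of `J` with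
eigenvalue `λ < M`. -/
theorem shape_condition_for_LRE
    (m : Fin 3 → ℝ) (hm : ∀ k, 0 < m k)
    (c12 c23 c31 : ℝ) (u12 u23 u31 : ℝ)
    (hu12 : 0 < u12) (hu23 : 0 < u23) (hu31 : 0 < u31)
    (J : Matrix (Fin 3) (Fin 3) ℝ)
    (hJ : J = !![m 1 + m 2, -Real.sqrt (m 0 * m 1) * c12, -Real.sqrt (m 0 * m 2) * c31;
                 -Real.sqrt (m 1 * m 0) * c12, m 2 + m 0, -Real.sqrt (m 1 * m 2) * c23;
                 -Real.sqrt (m 2 * m 0) * c31, -Real.sqrt (m 2 * m 1) * c23, m 0 + m 1])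
    (M : ℝ) (hM : M = m 0 + m 1 + m 2) :
    (∃ c1 c2 c3 ω : ℝ, 0 < c1 ∧ 0 < c2 ∧ 0 < c3 ∧
      J.mulVec ![Real.sqrt (m 0) * c1, Real.sqrt (m 1) * c2, Real.sqrt (m 2) * c3]
        = (M - (m 0 * c1 ^ 2 + m 1 * c2 ^ 2 + m 2 * c3 ^ 2)) •
          ![Real.sqrt (m 0) * c1, Real.sqrt (m 1) * c2, Real.sqrt (m 2) * c3] ∧
      u12 / (c1 * c2) = u23 / (c2 * c3) ∧
      u23 / (c2 * c3) = u31 / (c3 * c1) ∧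
      u31 / (c3 * c1) = ω ^ 2 / (m 0 * c1 ^ 2 + m 1 * c2 ^ 2 + m 2 * c3 ^ 2))
    ↔
    (∃ lam : ℝ, lam < M ∧
      J.mulVec ![Real.sqrt (m 0) / u23, Real.sqrt (m 1) / u31, Real.sqrt (m 2) / u12]
        = lam • ![Real.sqrt (m 0) / u23, Real.sqrt (m 1) / u31, Real.sqrt (m 2) / u12]) :=
  shape_condition_for_LRE_general m hm u12 u23 u31 hu12 hu23 hu31 J M
end

section
/- Let m_1, m_2, m_3 > 0 and let c ∈ ℝ with c ≠ 1 (c representing cos σ for a common arc angle σ = σ_12 = σ_23 = σ_31 of an equilateral triangle on the sphere). Let J be the 3×3 symmetric matrix with diagonal entries (m_2+m_3, m_3+m_1, m_1+m_2) and all off-diagonal entries J_{ij} = −√(m_i m_j) c. If there exists λ ∈ ℝ such that J (√m_1, √m_2, √m_3)ᵀ = λ (√m_1, √m_2, √m_3)ᵀ, then m_1 = m_2 = m_3. Consequently, an equilateral triangle is a Lagrangian relative equilibrium on S² only if the three masses are equal. -/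
open Real Matrix

/-- An equilateral triangle is a Lagrangian relative equilibrium on the sphere
only if the three masses are equal: if `(√m_1, √m_2, √m_3)ᵀ` is an eigenvector
of the equilateral matrix `J` (with common cosine `c ≠ 1`), then
`m_1 = m_2 = m_3`. -/
theorem equilateral_LRE_requires_equal_masses
    (m1 m2 m3 : ℝ) (hm1 : 0 < m1) (hm2 : 0 < m2) (hm3 : 0 < m3)
    (c : ℝ) (hc : c ≠ 1)
    (J : Matrix (Fin 3) (Fin 3) ℝ)
    (hJ : J = !![m2 + m3, -Real.sqrt (m1 * m2) * c, -Real.sqrt (m1 * m3) * c;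
                 -Real.sqrt (m2 * m1) * c, m3 + m1, -Real.sqrt (m2 * m3) * c;
                 -Real.sqrt (m3 * m1) * c, -Real.sqrt (m3 * m2) * c, m1 + m2])
    (lam : ℝ)
    (heig : J.mulVec ![Real.sqrt m1, Real.sqrt m2, Real.sqrt m3]
      = lam • ![Real.sqrt m1, Real.sqrt m2, Real.sqrt m3]) :
    m1 = m2 ∧ m2 = m3 := by
  subst hJ
  have s1 : 0 < Real.sqrt m1 := Real.sqrt_pos.mpr hm1
  have s2 : 0 < Real.sqrt m2 := Real.sqrt_pos.mpr hm2
  have s3 : 0 < Real.sqrt m3 := Real.sqrt_pos.mpr hm3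
  have q1 : Real.sqrt m1 * Real.sqrt m1 = m1 := Real.mul_self_sqrt hm1.le
  have q2 : Real.sqrt m2 * Real.sqrt m2 = m2 := Real.mul_self_sqrt hm2.le
  have q3 : Real.sqrt m3 * Real.sqrt m3 = m3 := Real.mul_self_sqrt hm3.le
  have h0 := congrFun heig 0
  have h1 := congrFun heig 1
  have h2 := congrFun heig 2
  simp [Matrix.mulVec, dotProduct, Fin.sum_univ_three,
    Real.sqrt_mul hm1.le, Real.sqrt_mul hm2.le, Real.sqrt_mul hm3.le] at h0 h1 h2
  have e0 : (1 - c) * (m2 + m3) = lam := by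
    have h : Real.sqrt m1 * ((1 - c) * (m2 + m3) - lam) = 0 := by
      linear_combination h0 + Real.sqrt m1 * c * q2 + Real.sqrt m1 * c * q3
    rcases mul_eq_zero.mp h with h | h
    · exact absurd h s1.ne'
    · linarith
  have e1 : (1 - c) * (m3 + m1) = lam := by
    have h : Real.sqrt m2 * ((1 - c) * (m3 + m1) - lam) = 0 := by
      linear_combination h1 + Real.sqrt m2 * c * q1 + Real.sqrt m2 * c * q3
    rcases mul_eq_zero.mp h with h | h
    · exact absurd h s2.ne'
    · linarith
  have e2 : (1 - c) * (m1 + m2) = lam := by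
    have h : Real.sqrt m3 * ((1 - c) * (m1 + m2) - lam) = 0 := by
      linear_combination h2 + Real.sqrt m3 * c * q1 + Real.sqrt m3 * c * q2
    rcases mul_eq_zero.mp h with h | h
    · exact absurd h s3.ne'
    · linarith
  have hc' : (1 : ℝ) - c ≠ 0 := sub_ne_zero.mpr (Ne.symm hc)
  have h12 : m2 + m3 = m3 + m1 := mul_left_cancel₀ hc' (e0.trans e1.symm)
  have h23 : m3 + m1 = m1 + m2 := mul_left_cancel₀ hc' (e1.trans e2.symm)
  exact ⟨by linarith, by linarith⟩
end

section
/- Let m > 0 and θ ∈ (0, 2π/3) with θ ≠ π/2. Set θ_1 = −θ, θ_2 = θ, θ_3 = 0, equal masses m_1 = m_2 = m_3 = m, and ω² = 2m( 1/|sin(2θ)|³ + 1/(sin²θ · sin(2θ)) ). Then ω² > 0 and the equations of motion for a collinear relative equilibrium on a rotating meridian under the cotangent potential hold: (ω²/2) m sin(2θ_k) = Σ_{j≠k} m² sin(θ_k − θ_j) / |sin(θ_k − θ_j)|³ for k = 1,2,3. That is, for every such θ the isosceles configuration with the middle body at the pole and the outer bodies at polar angles ±θ is an Eulerian relative equilibrium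 of the equal-mass curved three-body problem. -/
open Real

/-! The outer bodies are mirror images of each other, so the equation for `θ_1` is the negative
of the one for `θ_2`, and the pole body feels two cancelling forces. The value of `ω²` is
chosen to solve the equation for `θ_2`; it is positive trivially when `θ < π/2`, and for
`π/2 < θ < 2π/3` because then `|cos θ| < 1/2`, i.e. `|sin 2θ| < sin θ`. -/

lemma abs_cos_lt_half {θ : ℝ} (h₁ : π / 3 < θ) (h₂ : θ < 2 * π / 3) : |cos θ| < 1 / 2 := by
  have hcos_two_pi_div_three : cos (2 * π / 3) = -(1 / 2) := by
    rw [show 2 * π / 3 = π - π / 3 by ring, cos_pi_sub, cos_pi_div_three]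
  have hupper : cos θ < cos (π / 3) :=
    cos_lt_cos_of_nonneg_of_le_pi (by positivity) (by linarith [pi_pos]) h₁
  have hlower : cos (2 * π / 3) < cos θ :=
    cos_lt_cos_of_nonneg_of_le_pi (by linarith [pi_pos]) (by linarith [pi_pos]) h₂
  rw [cos_pi_div_three] at hupper
  rw [abs_lt]
  constructor <;> linarith

lemma abs_sin_two_mul_lt_sin {θ : ℝ} (h₁ : π / 3 < θ) (h₂ : θ < 2 * π / 3) :
    |sin (2 * θ)| < sin θ := by
  have hsin : 0 < sin θ := sin_pos_of_pos_of_lt_pi (by linarith [pi_pos]) (by linarith [pi_pos])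
  calc |sin (2 * θ)| = 2 * sin θ * |cos θ| := by
        rw [sin_two_mul, abs_mul, abs_mul, abs_two, abs_of_pos hsin]
    _ < 2 * sin θ * (1 / 2) := by gcongr; exact abs_cos_lt_half h₁ h₂
    _ = sin θ := by ring

lemma one_div_abs_pow_three_add_one_div_pos {s t : ℝ} (ht : t ≠ 0) (hts : |t| < |s|) :
    0 < 1 / |t| ^ 3 + 1 / (s ^ 2 * t) := by
  have hat : 0 < |t| := abs_pos.mpr ht
  have hbound : |1 / (s ^ 2 * t)| < 1 / |t| ^ 3 := by
    rw [abs_div, abs_one, abs_mul, abs_pow]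
    gcongr
    rw [pow_succ]
    gcongr
  linarith [neg_abs_le (1 / (s ^ 2 * t))]

lemma outer_body_equation (m : ℝ) {s t : ℝ} (hs : 0 < s) (ht : t ≠ 0) :
    2 * m * (1 / |t| ^ 3 + 1 / (s ^ 2 * t)) / 2 * (m * t)
      = m ^ 2 * t / |t| ^ 3 + m ^ 2 * s / |s| ^ 3 := by
  rw [abs_of_pos hs]
  field_simp

/-- Isosceles Eulerian relative equilibria of the equal-mass curved three-body
problem under the cotangent potential: for `θ ∈ (0, 2π/3)`, `θ ≠ π/2`, the
configuration `θ_1 = −θ, θ_2 = θ, θ_3 = 0` with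
`ω² = 2m(1/|sin 2θ|³ + 1/(sin²θ sin 2θ))` satisfies the equations of motion
on a rotating meridian, and `ω² > 0`. -/
theorem isosceles_ERE_cotangent
    (m θ : ℝ) (hm : 0 < m)
    (hθ0 : 0 < θ) (hθ1 : θ < 2 * Real.pi / 3) (hθ2 : θ ≠ Real.pi / 2)
    (θ1 θ2 θ3 W : ℝ)
    (hθ1def : θ1 = -θ) (hθ2def : θ2 = θ) (hθ3def : θ3 = 0)
    (hW : W = 2 * m * (1 / |Real.sin (2 * θ)| ^ 3
      + 1 / (Real.sin θ ^ 2 * Real.sin (2 * θ)))) :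
    0 < W ∧
    (W / 2 * (m * Real.sin (2 * θ1))
      = m ^ 2 * Real.sin (θ1 - θ2) / |Real.sin (θ1 - θ2)| ^ 3
        + m ^ 2 * Real.sin (θ1 - θ3) / |Real.sin (θ1 - θ3)| ^ 3) ∧
    (W / 2 * (m * Real.sin (2 * θ2))
      = m ^ 2 * Real.sin (θ2 - θ1) / |Real.sin (θ2 - θ1)| ^ 3
        + m ^ 2 * Real.sin (θ2 - θ3) / |Real.sin (θ2 - θ3)| ^ 3) ∧
    (W / 2 * (m * Real.sin (2 * θ3))
      = m ^ 2 * Real.sin (θ3 - θ1) / |Real.sin (θ3 - θ1)| ^ 3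
        + m ^ 2 * Real.sin (θ3 - θ2) / |Real.sin (θ3 - θ2)| ^ 3) := by
  subst θ1 θ2 θ3 W
  have hsin : 0 < sin θ := sin_pos_of_pos_of_lt_pi hθ0 (by linarith [pi_pos])
  have hbracket : sin (2 * θ) ≠ 0 ∧
      0 < 1 / |sin (2 * θ)| ^ 3 + 1 / (sin θ ^ 2 * sin (2 * θ)) := by
    rcases hθ2.lt_or_gt with hlt | hgt
    · have hpos : 0 < sin (2 * θ) := sin_pos_of_pos_of_lt_pi (by linarith) (by linarith)
      exact ⟨hpos.ne', by positivity⟩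
    · have hcos : cos θ < 0 := cos_neg_of_pi_div_two_lt_of_lt hgt (by linarith [pi_pos])
      have hne : sin (2 * θ) ≠ 0 := by
        rw [sin_two_mul]; exact mul_ne_zero (by positivity) hcos.ne
      refine ⟨hne, one_div_abs_pow_three_add_one_div_pos hne ?_⟩
      rw [abs_of_pos hsin]
      exact abs_sin_two_mul_lt_sin (by linarith [pi_pos]) hθ1
  obtain ⟨hne, hpos⟩ := hbracket
  have houter := outer_body_equation m hsin hne
  refine ⟨by positivity, ?_, ?_, ?_⟩
  · rw [show -θ - θ = -(θ - -θ) by ring, show θ - -θ = 2 * θ by ring, mul_neg]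
    simp only [sin_neg, abs_neg, sub_zero, mul_neg, neg_div]
    linarith
  · rw [show θ - -θ = 2 * θ by ring, sub_zero]
    exact houter
  · simp only [mul_zero, sin_zero, zero_sub, sub_neg_eq_add, zero_add, sin_neg, abs_neg,
      mul_neg, neg_div, add_neg_cancel]
end
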